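/- arXiv:2410.14908 — 3 statements merged into one kernel-verified Lean document; each statement's English description precedes it below -/
import Mathlib

section
/- Let (A, μ, 1_A) be an associative unital algebra over a field k and V a k-vector space with a distinguished element 1_V∈V. The vector space A⊗V admits an associative algebra structure with unit 1_A⊗1_V whose multiplication satisfies (a⊗1_V)(b⊗v) = ab⊗v for all a,b∈A and v∈V, if and only if there exist linear maps σ: V⊗V → A⊗V and R: V⊗A → A⊗V satisfying the Brzeziński crossed product conditions (brz1)–(brz5); in that case the multiplication is given by μ_{A⊗V} = (μ₂⊗id_V)∘(id_A⊗id_A⊗σ)∘(id_A⊗R⊗id_V), where μ₂ = μ∘(id_A⊗μ) = μ∘(μ⊗id_A). -/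
open TensorProduct LinearMap

set_option maxHeartbeats 1000000
set_option synthInstance.maxHeartbeats 400000

noncomputable section

namespace TwoSidedCP

variable (k : Type*) [Field k]

/-- The associator as a linear map. -/
abbrev α (X Y Z : Type*) [AddCommGroup X] [Module k X] [AddCommGroup Y] [Module k Y]
    [AddCommGroup Z] [Module k Z] :
    (X ⊗[k] Y) ⊗[k] Z →ₗ[k] X ⊗[k] (Y ⊗[k] Z) :=
  (TensorProduct.assoc k X Y Z).toLinearMap

/-- The inverse associator as a linear map. -/
abbrev α' (X Y Z : Type*) [AddCommGroup X] [Module k X] [AddCommGroup Y] [Module k Y]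
    [AddCommGroup Z] [Module k Z] :
    X ⊗[k] (Y ⊗[k] Z) →ₗ[k] (X ⊗[k] Y) ⊗[k] Z :=
  (TensorProduct.assoc k X Y Z).symm.toLinearMap

/-- Multiplication `A ⊗ (A ⊗ V) → A ⊗ V` of the two `A`-factors. -/
def mulAV (A : Type*) [Ring A] [Algebra k A] (V : Type*) [AddCommGroup V] [Module k V] :
    A ⊗[k] (A ⊗[k] V) →ₗ[k] A ⊗[k] V :=
  rTensor V (mul' k A) ∘ₗ α' k A A V

/-- Multiplication `(X ⊗ C) ⊗ C → X ⊗ C` of the two `C`-factors. -/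
def mulXC (X : Type*) [AddCommGroup X] [Module k X] (C : Type*) [Ring C] [Algebra k C] :
    (X ⊗[k] C) ⊗[k] C →ₗ[k] X ⊗[k] C :=
  lTensor X (mul' k C) ∘ₗ α k X C C

section TwistingMaps
variable (A B : Type*) [Ring A] [Algebra k A] [Ring B] [Algebra k B]

/-- `R : B ⊗ A → A ⊗ B` is a twisting map between the algebras `A` and `B`:
  in Sweedler notation, `R(b ⊗ 1) = 1 ⊗ b`, `R(1 ⊗ a) = a ⊗ 1`,
  `(aa')_R ⊗ b_R = a_R a'_r ⊗ b_{R_r}` and `a_R ⊗ (bb')_R = a_{R_r} ⊗ b_r b'_R`. -/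
structure IsTwistingMap (R : B ⊗[k] A →ₗ[k] A ⊗[k] B) : Prop where
  unit_left : ∀ a : A, R ((1 : B) ⊗ₜ[k] a) = a ⊗ₜ[k] (1 : B)
  unit_right : ∀ b : B, R (b ⊗ₜ[k] (1 : A)) = (1 : A) ⊗ₜ[k] b
  mul_left : R ∘ₗ lTensor B (mul' k A) ∘ₗ α k B A A
      = rTensor B (mul' k A) ∘ₗ α' k A A B ∘ₗ lTensor A R ∘ₗ α k A B A ∘ₗ rTensor A R
  mul_right : R ∘ₗ rTensor A (mul' k B)
      = lTensor A (mul' k B) ∘ₗ α k A B B ∘ₗ rTensor B R ∘ₗ α' k B A B ∘ₗ lTensor B R ∘ₗ α k B B A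

/-- The multiplication `(a ⊗ b)(a' ⊗ b') = a a'_R ⊗ b_R b'` of the twisted tensor
  product `A ⊗_R B`. -/
def twistMul (R : B ⊗[k] A →ₗ[k] A ⊗[k] B) :
    (A ⊗[k] B) ⊗[k] (A ⊗[k] B) →ₗ[k] A ⊗[k] B :=
  TensorProduct.map (mul' k A) (mul' k B) ∘ₗ α' k A A (B ⊗[k] B) ∘ₗ lTensor A (α k A B B)
    ∘ₗ lTensor A (rTensor B R) ∘ₗ lTensor A (α' k B A B) ∘ₗ α k A B (A ⊗[k] B)

end TwistingMaps

section Brzezinski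
variable (A V : Type*) [Ring A] [Algebra k A] [AddCommGroup V] [Module k V]

/-- The Brzeziński crossed product conditions (brz1)-(brz5) for the data `(A, V, R, σ)`. -/
structure IsBrzData (e : V) (R : V ⊗[k] A →ₗ[k] A ⊗[k] V)
    (σ : V ⊗[k] V →ₗ[k] A ⊗[k] V) : Prop where
  brz1a : ∀ a : A, R (e ⊗ₜ[k] a) = a ⊗ₜ[k] e
  brz1b : ∀ v : V, R (v ⊗ₜ[k] (1 : A)) = (1 : A) ⊗ₜ[k] v
  brz2a : ∀ v : V, σ (e ⊗ₜ[k] v) = (1 : A) ⊗ₜ[k] v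
  brz2b : ∀ v : V, σ (v ⊗ₜ[k] e) = (1 : A) ⊗ₜ[k] v
  brz3 : R ∘ₗ lTensor V (mul' k A) ∘ₗ α k V A A
      = rTensor V (mul' k A) ∘ₗ α' k A A V ∘ₗ lTensor A R ∘ₗ α k A V A ∘ₗ rTensor A R
  brz4 : rTensor V (mul' k A) ∘ₗ α' k A A V ∘ₗ lTensor A σ ∘ₗ α k A V V ∘ₗ rTensor V R
        ∘ₗ α' k V A V ∘ₗ lTensor V σ ∘ₗ α k V V V
      = rTensor V (mul' k A) ∘ₗ α' k A A V ∘ₗ lTensor A σ ∘ₗ α k A V V ∘ₗ rTensor V σ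
  brz5 : rTensor V (mul' k A) ∘ₗ α' k A A V ∘ₗ lTensor A σ ∘ₗ α k A V V ∘ₗ rTensor V R
        ∘ₗ α' k V A V ∘ₗ lTensor V R ∘ₗ α k V V A
      = rTensor V (mul' k A) ∘ₗ α' k A A V ∘ₗ lTensor A R ∘ₗ α k A V A ∘ₗ rTensor A σ

/-- The multiplication `μ_{A⊗V} = (μ₂ ⊗ id_V)∘(id_A ⊗ id_A ⊗ σ)∘(id_A ⊗ R ⊗ id_V)`
  of the Brzeziński crossed product `A ⊗_{R,σ} V`. -/
def brzMul (R : V ⊗[k] A →ₗ[k] A ⊗[k] V) (σ : V ⊗[k] V →ₗ[k] A ⊗[k] V) :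
    (A ⊗[k] V) ⊗[k] (A ⊗[k] V) →ₗ[k] A ⊗[k] V :=
  rTensor V (mul' k A) ∘ₗ α' k A A V ∘ₗ rTensor (A ⊗[k] V) (mul' k A)
    ∘ₗ α' k A A (A ⊗[k] V) ∘ₗ lTensor A (lTensor A σ) ∘ₗ lTensor A (α k A V V)
    ∘ₗ lTensor A (rTensor V R) ∘ₗ lTensor A (α' k V A V) ∘ₗ α k A V (A ⊗[k] V)

end Brzezinski

section Mirror
variable (W B : Type*) [AddCommGroup W] [Module k W] [AddCommGroup B] [Module k B]

/-- The mirror crossed product conditions (mir0)-(mir4) for the data `(W, B, P, ν)`,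
  where the multiplication of `B` is given by `mB` with unit `uB`. -/
structure IsMirrorData (mB : B ⊗[k] B →ₗ[k] B) (uB : B) (e : W)
    (P : B ⊗[k] W →ₗ[k] W ⊗[k] B) (ν : W ⊗[k] W →ₗ[k] W ⊗[k] B) : Prop where
  mir0a : ∀ b : B, P (b ⊗ₜ[k] e) = e ⊗ₜ[k] b
  mir0b : ∀ w : W, P (uB ⊗ₜ[k] w) = w ⊗ₜ[k] uB
  mir1a : ∀ w : W, ν (w ⊗ₜ[k] e) = w ⊗ₜ[k] uB
  mir1b : ∀ w : W, ν (e ⊗ₜ[k] w) = w ⊗ₜ[k] uB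
  mir2 : P ∘ₗ rTensor W mB
      = lTensor W mB ∘ₗ α k W B B ∘ₗ rTensor B P ∘ₗ α' k B W B ∘ₗ lTensor B P ∘ₗ α k B B W
  mir3 : lTensor W mB ∘ₗ α k W B B ∘ₗ rTensor B ν ∘ₗ α' k W W B ∘ₗ lTensor W P
        ∘ₗ α k W B W ∘ₗ rTensor W ν
      = lTensor W mB ∘ₗ α k W B B ∘ₗ rTensor B ν ∘ₗ α' k W W B ∘ₗ lTensor W ν ∘ₗ α k W W W
  mir4 : lTensor W mB ∘ₗ α k W B B ∘ₗ rTensor B ν ∘ₗ α' k W W B ∘ₗ lTensor W P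
        ∘ₗ α k W B W ∘ₗ rTensor W P
      = lTensor W mB ∘ₗ α k W B B ∘ₗ rTensor B P ∘ₗ α' k B W B ∘ₗ lTensor B ν ∘ₗ α k B W W

/-- The multiplication `μ_{W⊗B} = (id_W ⊗ μ₂)∘(ν ⊗ id_B ⊗ id_B)∘(id_W ⊗ P ⊗ id_B)`
  of the mirror crossed product `W ⊗̄_{P,ν} B`. -/
def mirMul (mB : B ⊗[k] B →ₗ[k] B) (P : B ⊗[k] W →ₗ[k] W ⊗[k] B)
    (ν : W ⊗[k] W →ₗ[k] W ⊗[k] B) :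
    (W ⊗[k] B) ⊗[k] (W ⊗[k] B) →ₗ[k] W ⊗[k] B :=
  lTensor W mB ∘ₗ lTensor W (lTensor B mB) ∘ₗ α k W B (B ⊗[k] B)
    ∘ₗ rTensor (B ⊗[k] B) ν ∘ₗ α' k W W (B ⊗[k] B) ∘ₗ lTensor W (α k W B B)
    ∘ₗ lTensor W (rTensor B P) ∘ₗ lTensor W (α' k B W B) ∘ₗ α k W B (W ⊗[k] B)

end Mirror

section TwoSided
variable (A V C : Type*) [Ring A] [Algebra k A] [AddCommGroup V] [Module k V]
  [Ring C] [Algebra k C]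

/-- auxiliary map: multiply the leftover `A`-factor and `C`-factor into `A ⊗ V ⊗ C`. -/
def tsTail : (A ⊗[k] ((A ⊗[k] V) ⊗[k] C)) ⊗[k] C →ₗ[k] (A ⊗[k] V) ⊗[k] C :=
  mulXC k (A ⊗[k] V) C ∘ₗ rTensor C (rTensor C (mulAV k A V) ∘ₗ α' k A (A ⊗[k] V) C)

/-- Two-sided crossed product data `(A, V, C, R1, R2, R3, E)`:
  conditions (i)-(v) of Theorem 2.1 of the paper. -/
structure IsTwoSidedData (e : V) (R1 : V ⊗[k] A →ₗ[k] A ⊗[k] V)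
    (R2 : C ⊗[k] V →ₗ[k] V ⊗[k] C) (R3 : C ⊗[k] A →ₗ[k] A ⊗[k] C)
    (E : V ⊗[k] V →ₗ[k] (A ⊗[k] V) ⊗[k] C) : Prop where
  twist : IsTwistingMap k A C R3
  r1a : ∀ a : A, R1 (e ⊗ₜ[k] a) = a ⊗ₜ[k] e
  r1b : ∀ v : V, R1 (v ⊗ₜ[k] (1 : A)) = (1 : A) ⊗ₜ[k] v
  r2a : ∀ c : C, R2 (c ⊗ₜ[k] e) = e ⊗ₜ[k] c
  r2b : ∀ v : V, R2 ((1 : C) ⊗ₜ[k] v) = v ⊗ₜ[k] (1 : C)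
  ea : ∀ v : V, E (e ⊗ₜ[k] v) = ((1 : A) ⊗ₜ[k] v) ⊗ₜ[k] (1 : C)
  eb : ∀ v : V, E (v ⊗ₜ[k] e) = ((1 : A) ⊗ₜ[k] v) ⊗ₜ[k] (1 : C)
  eq1 : R1 ∘ₗ lTensor V (mul' k A) ∘ₗ α k V A A
      = rTensor V (mul' k A) ∘ₗ α' k A A V ∘ₗ lTensor A R1 ∘ₗ α k A V A ∘ₗ rTensor A R1
  eq2 : R2 ∘ₗ rTensor V (mul' k C)
      = lTensor V (mul' k C) ∘ₗ α k V C C ∘ₗ rTensor C R2 ∘ₗ α' k C V C ∘ₗ lTensor C R2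
        ∘ₗ α k C C V
  eq3 : lTensor A R2 ∘ₗ α k A C V ∘ₗ rTensor V R3 ∘ₗ α' k C A V ∘ₗ lTensor C R1
      = α k A V C ∘ₗ rTensor C R1 ∘ₗ α' k V A C ∘ₗ lTensor V R3 ∘ₗ α k V C A
        ∘ₗ rTensor A R2 ∘ₗ α' k C V A
  eq4 : rTensor C (mulAV k A V) ∘ₗ α' k A (A ⊗[k] V) C ∘ₗ lTensor A E ∘ₗ α k A V V
        ∘ₗ rTensor V R1 ∘ₗ α' k V A V ∘ₗ lTensor V R1 ∘ₗ α k V V A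
      = rTensor C (mulAV k A V) ∘ₗ rTensor C (lTensor A R1) ∘ₗ rTensor C (α k A V A)
        ∘ₗ α' k (A ⊗[k] V) A C ∘ₗ lTensor (A ⊗[k] V) R3 ∘ₗ α k (A ⊗[k] V) C A ∘ₗ rTensor A E
  eq5 : mulXC k (A ⊗[k] V) C ∘ₗ rTensor C E ∘ₗ α' k V V C ∘ₗ lTensor V R2
        ∘ₗ α k V C V ∘ₗ rTensor V R2
      = mulXC k (A ⊗[k] V) C ∘ₗ rTensor C (α' k A V C) ∘ₗ rTensor C (lTensor A R2)
        ∘ₗ rTensor C (α k A C V) ∘ₗ rTensor C (rTensor V R3) ∘ₗ rTensor C (α' k C A V)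
        ∘ₗ α' k C (A ⊗[k] V) C ∘ₗ lTensor C E ∘ₗ α k C V V
  eq6 : tsTail k A V C ∘ₗ rTensor C (lTensor A E) ∘ₗ rTensor C (α k A V V)
        ∘ₗ rTensor C (rTensor V R1) ∘ₗ rTensor C (α' k V A V)
        ∘ₗ α' k V (A ⊗[k] V) C ∘ₗ lTensor V E ∘ₗ α k V V V
      = tsTail k A V C ∘ₗ rTensor C (lTensor A E) ∘ₗ rTensor C (α k A V V)
        ∘ₗ α' k (A ⊗[k] V) V C ∘ₗ lTensor (A ⊗[k] V) R2 ∘ₗ α k (A ⊗[k] V) C V ∘ₗ rTensor V E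

/-- The map `P = (id_A ⊗ R2)∘(R3 ⊗ id_V) : C ⊗ (A ⊗ V) → (A ⊗ V) ⊗ C`. -/
def tsP (R2 : C ⊗[k] V →ₗ[k] V ⊗[k] C) (R3 : C ⊗[k] A →ₗ[k] A ⊗[k] C) :
    C ⊗[k] (A ⊗[k] V) →ₗ[k] (A ⊗[k] V) ⊗[k] C :=
  α' k A V C ∘ₗ lTensor A R2 ∘ₗ α k A C V ∘ₗ rTensor V R3 ∘ₗ α' k C A V

/-- The map `ν = (μ_A ⊗ id_V ⊗ id_C)∘(μ_A ⊗ E)∘(id_A ⊗ R1 ⊗ id_V)`,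
  `ν((a ⊗ v) ⊗ (a' ⊗ v')) = (a a'_{R1} E_A(v_{R1}, v') ⊗ E_V(v_{R1}, v')) ⊗ E_C(v_{R1}, v')`. -/
def tsNu (R1 : V ⊗[k] A →ₗ[k] A ⊗[k] V) (E : V ⊗[k] V →ₗ[k] (A ⊗[k] V) ⊗[k] C) :
    (A ⊗[k] V) ⊗[k] (A ⊗[k] V) →ₗ[k] (A ⊗[k] V) ⊗[k] C :=
  rTensor C (mulAV k A V) ∘ₗ α' k A (A ⊗[k] V) C ∘ₗ lTensor A (rTensor C (mulAV k A V))
    ∘ₗ lTensor A (α' k A (A ⊗[k] V) C) ∘ₗ lTensor A (lTensor A E) ∘ₗ lTensor A (α k A V V)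
    ∘ₗ lTensor A (rTensor V R1) ∘ₗ lTensor A (α' k V A V) ∘ₗ α k A V (A ⊗[k] V)

/-- The map `R = (R1 ⊗ id_C)∘(id_V ⊗ R3) : (V ⊗ C) ⊗ A → A ⊗ (V ⊗ C)`. -/
def tsR (R1 : V ⊗[k] A →ₗ[k] A ⊗[k] V) (R3 : C ⊗[k] A →ₗ[k] A ⊗[k] C) :
    (V ⊗[k] C) ⊗[k] A →ₗ[k] A ⊗[k] (V ⊗[k] C) :=
  α k A V C ∘ₗ rTensor C R1 ∘ₗ α' k V A C ∘ₗ lTensor V R3 ∘ₗ α k V C A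

/-- The map `σ = (id_A ⊗ id_V ⊗ μ_C)∘(E ⊗ μ_C)∘(id_V ⊗ R2 ⊗ id_C)`,
  `σ((v ⊗ c) ⊗ (v' ⊗ c')) = E_A(v, v'_{R2}) ⊗ (E_V(v, v'_{R2}) ⊗ E_C(v, v'_{R2}) c_{R2} c')`. -/
def tsSigma (R2 : C ⊗[k] V →ₗ[k] V ⊗[k] C) (E : V ⊗[k] V →ₗ[k] (A ⊗[k] V) ⊗[k] C) :
    (V ⊗[k] C) ⊗[k] (V ⊗[k] C) →ₗ[k] A ⊗[k] (V ⊗[k] C) :=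
  α k A V C ∘ₗ mulXC k (A ⊗[k] V) C ∘ₗ rTensor C E ∘ₗ α' k V V C
    ∘ₗ lTensor V (lTensor V (mul' k C)) ∘ₗ lTensor V (α k V C C)
    ∘ₗ lTensor V (rTensor C R2) ∘ₗ lTensor V (α' k C V C) ∘ₗ α k V C (V ⊗[k] C)

/-- The multiplication of the two-sided crossed product `A ⋊ V ⋉ C`:
  `(a ⊗ v ⊗ c)(a' ⊗ v' ⊗ c') = a (a'_{R3})_{R1} E_A(v_{R1}, v'_{R2}) ⊗ E_V(v_{R1}, v'_{R2})
    ⊗ E_C(v_{R1}, v'_{R2}) (c_{R3})_{R2} c'`. -/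
def tsMul (R1 : V ⊗[k] A →ₗ[k] A ⊗[k] V) (R2 : C ⊗[k] V →ₗ[k] V ⊗[k] C)
    (R3 : C ⊗[k] A →ₗ[k] A ⊗[k] C) (E : V ⊗[k] V →ₗ[k] (A ⊗[k] V) ⊗[k] C) :
    ((A ⊗[k] V) ⊗[k] C) ⊗[k] ((A ⊗[k] V) ⊗[k] C) →ₗ[k] (A ⊗[k] V) ⊗[k] C :=
  lTensor (A ⊗[k] V) (mul' k C) ∘ₗ α k (A ⊗[k] V) C C
    ∘ₗ rTensor C (tsNu k A V C R1 E) ∘ₗ α' k (A ⊗[k] V) (A ⊗[k] V) C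
    ∘ₗ lTensor (A ⊗[k] V) (lTensor (A ⊗[k] V) (mul' k C))
    ∘ₗ lTensor (A ⊗[k] V) (α k (A ⊗[k] V) C C)
    ∘ₗ lTensor (A ⊗[k] V) (rTensor C (tsP k A V C R2 R3))
    ∘ₗ lTensor (A ⊗[k] V) (α' k C (A ⊗[k] V) C)
    ∘ₗ α k (A ⊗[k] V) C ((A ⊗[k] V) ⊗[k] C)

/-- The canonical linear isomorphism `A ⊗ V ⊗ C ≅ V ⊗ (A ⊗ C)`. -/
def phiVAC : ((A ⊗[k] V) ⊗[k] C) ≃ₗ[k] V ⊗[k] (A ⊗[k] C) :=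
  (TensorProduct.congr (TensorProduct.comm k A V) (LinearEquiv.refl k C)).trans
    (TensorProduct.assoc k V A C)

end TwoSided

section Iterated
variable (A B C : Type*) [Ring A] [Algebra k A] [Ring B] [Algebra k B] [Ring C] [Algebra k C]

/-- The multiplication of the iterated twisted tensor product:
  `(a ⊗ b ⊗ c)(a' ⊗ b' ⊗ c') = a (a'_{R3})_{R1} ⊗ b_{R1} b'_{R2} ⊗ (c_{R3})_{R2} c'`. -/
def iterMul (R1 : B ⊗[k] A →ₗ[k] A ⊗[k] B) (R2 : C ⊗[k] B →ₗ[k] B ⊗[k] C)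
    (R3 : C ⊗[k] A →ₗ[k] A ⊗[k] C) :
    ((A ⊗[k] B) ⊗[k] C) ⊗[k] ((A ⊗[k] B) ⊗[k] C) →ₗ[k] (A ⊗[k] B) ⊗[k] C :=
  rTensor C (twistMul k A B R1) ∘ₗ α' k (A ⊗[k] B) (A ⊗[k] B) C
    ∘ₗ lTensor (A ⊗[k] B) (lTensor (A ⊗[k] B) (mul' k C))
    ∘ₗ lTensor (A ⊗[k] B) (α k (A ⊗[k] B) C C)
    ∘ₗ lTensor (A ⊗[k] B) (rTensor C (tsP k A B C R2 R3))
    ∘ₗ lTensor (A ⊗[k] B) (α' k C (A ⊗[k] B) C)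
    ∘ₗ α k (A ⊗[k] B) C ((A ⊗[k] B) ⊗[k] C)

end Iterated

------------------------------------------------------------------------
-- auxiliary development
section BrzAux
variable {A V : Type*} [Ring A] [Algebra k A] [AddCommGroup V] [Module k V]

/-- combinator Φ -/
def bPhi (σ : V ⊗[k] V →ₗ[k] A ⊗[k] V) : (A ⊗[k] V) ⊗[k] V →ₗ[k] A ⊗[k] V :=
  rTensor V (mul' k A) ∘ₗ α' k A A V ∘ₗ lTensor A σ ∘ₗ α k A V V

/-- combinator Ψ -/
def bPsi (R : V ⊗[k] A →ₗ[k] A ⊗[k] V) : (A ⊗[k] V) ⊗[k] A →ₗ[k] A ⊗[k] V :=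
  rTensor V (mul' k A) ∘ₗ α' k A A V ∘ₗ lTensor A R ∘ₗ α k A V A

/-- combinator Λ -/
def bLam (R : V ⊗[k] A →ₗ[k] A ⊗[k] V) (σ : V ⊗[k] V →ₗ[k] A ⊗[k] V) :
    V ⊗[k] (A ⊗[k] V) →ₗ[k] A ⊗[k] V :=
  bPhi k σ ∘ₗ rTensor V R ∘ₗ α' k V A V

/-- combinator Θ -/
def bTheta (R : V ⊗[k] A →ₗ[k] A ⊗[k] V) (σ : V ⊗[k] V →ₗ[k] A ⊗[k] V) :
    (A ⊗[k] V) ⊗[k] (A ⊗[k] V) →ₗ[k] A ⊗[k] V :=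
  bPhi k σ ∘ₗ rTensor V (bPsi k R) ∘ₗ α' k (A ⊗[k] V) A V

variable (R : V ⊗[k] A →ₗ[k] A ⊗[k] V) (σ : V ⊗[k] V →ₗ[k] A ⊗[k] V)

lemma smul_tmul_AV (a p : A) (q : V) : a • (p ⊗ₜ[k] q) = (a * p) ⊗ₜ[k] q := by
  simp [TensorProduct.smul_tmul', smul_eq_mul]

lemma mulAV_smul (a : A) (z : A ⊗[k] V) :
    rTensor V (mul' k A) ((TensorProduct.assoc k A A V).symm (a ⊗ₜ[k] z)) = a • z := by
  induction z using TensorProduct.induction_on with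
  | zero => simp
  | tmul p q => simp [smul_tmul_AV, mul_assoc]
  | add x y hx hy => simp only [tmul_add, map_add, LinearEquiv.coe_coe] at hx hy ⊢
                     rw [hx, hy, smul_add]

lemma bPhi_tmul (p : A) (q v : V) : bPhi k σ ((p ⊗ₜ[k] q) ⊗ₜ[k] v) = p • σ (q ⊗ₜ[k] v) := by
  simp only [bPhi, comp_apply, LinearEquiv.coe_coe, assoc_tmul, lTensor_tmul]
  exact mulAV_smul k p _

lemma bPsi_tmul (p : A) (q : V) (a : A) :
    bPsi k R ((p ⊗ₜ[k] q) ⊗ₜ[k] a) = p • R (q ⊗ₜ[k] a) := by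
  simp only [bPsi, comp_apply, LinearEquiv.coe_coe, assoc_tmul, lTensor_tmul]
  exact mulAV_smul k p _

lemma bLam_tmul (u : V) (b : A) (w : V) :
    bLam k R σ (u ⊗ₜ[k] (b ⊗ₜ[k] w)) = bPhi k σ (R (u ⊗ₜ[k] b) ⊗ₜ[k] w) := by
  simp only [bLam, comp_apply, LinearEquiv.coe_coe, assoc_symm_tmul, rTensor_tmul]

lemma bTheta_tmul (y : A ⊗[k] V) (p : A) (q : V) :
    bTheta k R σ (y ⊗ₜ[k] (p ⊗ₜ[k] q)) = bPhi k σ (bPsi k R (y ⊗ₜ[k] p) ⊗ₜ[k] q) := by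
  simp only [bTheta, comp_apply, LinearEquiv.coe_coe, assoc_symm_tmul, rTensor_tmul]

lemma bPhi_smul (a : A) (y : A ⊗[k] V) (w : V) :
    bPhi k σ ((a • y) ⊗ₜ[k] w) = a • bPhi k σ (y ⊗ₜ[k] w) := by
  induction y using TensorProduct.induction_on with
  | zero => simp
  | tmul p q => rw [smul_tmul_AV, bPhi_tmul, bPhi_tmul, mul_smul]
  | add x y hx hy => rw [smul_add, add_tmul, add_tmul, map_add, map_add, hx, hy, smul_add]

lemma bPsi_smul (a : A) (y : A ⊗[k] V) (b : A) :
    bPsi k R ((a • y) ⊗ₜ[k] b) = a • bPsi k R (y ⊗ₜ[k] b) := by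
  induction y using TensorProduct.induction_on with
  | zero => simp
  | tmul p q => rw [smul_tmul_AV, bPsi_tmul, bPsi_tmul, mul_smul]
  | add x y hx hy => rw [smul_add, add_tmul, add_tmul, map_add, map_add, hx, hy, smul_add]

lemma bTheta_smul_left (p : A) (q : V) (ζ : A ⊗[k] V) :
    bTheta k R σ ((p ⊗ₜ[k] q) ⊗ₜ[k] ζ) = p • bLam k R σ (q ⊗ₜ[k] ζ) := by
  induction ζ using TensorProduct.induction_on with
  | zero => simp
  | tmul x y =>
      rw [bTheta_tmul, bPsi_tmul, bPhi_smul, bLam_tmul]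
  | add x y hx hy => rw [tmul_add, map_add, hx, hy, tmul_add, map_add, smul_add]

lemma brzMul_tmul (a : A) (u : V) (z : A ⊗[k] V) :
    brzMul k A V R σ ((a ⊗ₜ[k] u) ⊗ₜ[k] z) = a • bLam k R σ (u ⊗ₜ[k] z) := by
  induction z using TensorProduct.induction_on with
  | zero => simp
  | tmul b w =>
      rw [bLam_tmul]
      simp only [brzMul, comp_apply, LinearEquiv.coe_coe, assoc_tmul, assoc_symm_tmul,
        lTensor_tmul, rTensor_tmul]
      generalize R (u ⊗ₜ[k] b) = y
      induction y using TensorProduct.induction_on with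
      | zero => simp
      | tmul p q =>
          rw [bPhi_tmul]
          simp only [assoc_tmul, lTensor_tmul, assoc_symm_tmul, rTensor_tmul, mul'_apply]
          rw [mulAV_smul, mul_smul]
      | add x y hx hy =>
          simp only [tmul_add, add_tmul, map_add, LinearEquiv.coe_coe] at hx hy ⊢
          rw [hx, hy, smul_add]
  | add x y hx hy => rw [tmul_add, map_add, hx, hy, tmul_add, map_add, smul_add]

lemma brzMul_smul (a : A) (s t : A ⊗[k] V) :
    brzMul k A V R σ ((a • s) ⊗ₜ[k] t) = a • brzMul k A V R σ (s ⊗ₜ[k] t) := by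
  induction s using TensorProduct.induction_on with
  | zero => simp
  | tmul p q => rw [smul_tmul_AV, brzMul_tmul, brzMul_tmul, mul_smul]
  | add x y hx hy => rw [smul_add, add_tmul, add_tmul, map_add, map_add, hx, hy, smul_add]

lemma brzMul_CB (s : A ⊗[k] V) (c : A) (w : V) :
    brzMul k A V R σ (s ⊗ₜ[k] (c ⊗ₜ[k] w)) = bPhi k σ (bPsi k R (s ⊗ₜ[k] c) ⊗ₜ[k] w) := by
  induction s using TensorProduct.induction_on with
  | zero => simp
  | tmul x y => rw [brzMul_tmul, bLam_tmul, bPsi_tmul, bPhi_smul]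
  | add x y hx hy => rw [add_tmul, add_tmul, map_add, map_add, add_tmul, map_add, hx, hy]


section WithData
variable {k} {R} {σ} {e : V} (h : IsBrzData k A V e R σ)
include h

lemma brz3' (u : V) (a b : A) :
    R (u ⊗ₜ[k] (a * b)) = bPsi k R (R (u ⊗ₜ[k] a) ⊗ₜ[k] b) := by
  have H3 : R ∘ₗ lTensor V (mul' k A) ∘ₗ α k V A A = bPsi k R ∘ₗ rTensor A R := h.brz3
  have := LinearMap.congr_fun H3 ((u ⊗ₜ[k] a) ⊗ₜ[k] b)
  simpa only [comp_apply, LinearEquiv.coe_coe, assoc_tmul, lTensor_tmul, rTensor_tmul,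
    mul'_apply] using this

lemma brz4' (u v w : V) :
    bLam k R σ (u ⊗ₜ[k] σ (v ⊗ₜ[k] w)) = bPhi k σ (σ (u ⊗ₜ[k] v) ⊗ₜ[k] w) := by
  have H4 : bLam k R σ ∘ₗ lTensor V σ ∘ₗ α k V V V = bPhi k σ ∘ₗ rTensor V σ := h.brz4
  have := LinearMap.congr_fun H4 ((u ⊗ₜ[k] v) ⊗ₜ[k] w)
  simpa only [comp_apply, LinearEquiv.coe_coe, assoc_tmul, lTensor_tmul, rTensor_tmul]
    using this

lemma brz5' (u v : V) (a : A) :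
    bLam k R σ (u ⊗ₜ[k] R (v ⊗ₜ[k] a)) = bPsi k R (σ (u ⊗ₜ[k] v) ⊗ₜ[k] a) := by
  have H5 : bLam k R σ ∘ₗ lTensor V R ∘ₗ α k V V A = bPsi k R ∘ₗ rTensor A σ := h.brz5
  have := LinearMap.congr_fun H5 ((u ⊗ₜ[k] v) ⊗ₜ[k] a)
  simpa only [comp_apply, LinearEquiv.coe_coe, assoc_tmul, lTensor_tmul, rTensor_tmul]
    using this

lemma bLam_smul (u : V) (b : A) (ζ : A ⊗[k] V) :
    bLam k R σ (u ⊗ₜ[k] (b • ζ)) = bTheta k R σ (R (u ⊗ₜ[k] b) ⊗ₜ[k] ζ) := by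
  induction ζ using TensorProduct.induction_on with
  | zero => simp
  | tmul p q =>
      rw [smul_tmul_AV, bLam_tmul, brz3' h, bTheta_tmul]
  | add x y hx hy =>
      rw [smul_add, tmul_add, map_add, hx, hy, tmul_add, map_add]

lemma chaseCD (y : A ⊗[k] V) (y' w : V) :
    bPhi k σ (bPhi k σ (y ⊗ₜ[k] y') ⊗ₜ[k] w) = bTheta k R σ (y ⊗ₜ[k] σ (y' ⊗ₜ[k] w)) := by
  induction y using TensorProduct.induction_on with
  | zero => simp
  | tmul p q =>
      rw [bPhi_tmul, bPhi_smul, bTheta_smul_left, brz4' h]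
  | add x y hx hy => rw [add_tmul, map_add, add_tmul, map_add, hx, hy, add_tmul, map_add]

lemma chaseCC (q : V) (t : A ⊗[k] V) (w : V) :
    bPhi k σ (bLam k R σ (q ⊗ₜ[k] t) ⊗ₜ[k] w) = bLam k R σ (q ⊗ₜ[k] bPhi k σ (t ⊗ₜ[k] w)) := by
  induction t using TensorProduct.induction_on with
  | zero => simp
  | tmul x y =>
      rw [bLam_tmul, bPhi_tmul, bLam_smul h, chaseCD h]
  | add s t hs ht => rw [tmul_add, map_add, add_tmul, map_add, hs, ht, add_tmul, map_add,
      tmul_add, map_add]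

lemma chaseCE (y : A ⊗[k] V) (v : V) (c : A) (w : V) :
    bPhi k σ (bPsi k R (bPhi k σ (y ⊗ₜ[k] v) ⊗ₜ[k] c) ⊗ₜ[k] w)
      = bTheta k R σ (y ⊗ₜ[k] bLam k R σ (v ⊗ₜ[k] (c ⊗ₜ[k] w))) := by
  induction y using TensorProduct.induction_on with
  | zero => simp
  | tmul p q =>
      rw [bPhi_tmul, bPsi_smul, bPhi_smul, ← brz5' h, chaseCC h, ← bLam_tmul,
        bTheta_smul_left]
  | add x y hx hy => rw [add_tmul, map_add, add_tmul, map_add, add_tmul, map_add, hx, hy,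
      add_tmul, map_add]

lemma bLam_unit (x : A ⊗[k] V) : bLam k R σ (e ⊗ₜ[k] x) = x := by
  induction x using TensorProduct.induction_on with
  | zero => simp
  | tmul b w =>
      rw [bLam_tmul, h.brz1a, bPhi_tmul, h.brz2a, smul_tmul_AV, mul_one]
  | add x y hx hy => rw [tmul_add, map_add, hx, hy]

lemma brz_unit_left (x : A ⊗[k] V) :
    brzMul k A V R σ (((1 : A) ⊗ₜ[k] e) ⊗ₜ[k] x) = x := by
  rw [brzMul_tmul, bLam_unit h, one_smul]

lemma brz_unit_right (x : A ⊗[k] V) :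
    brzMul k A V R σ (x ⊗ₜ[k] ((1 : A) ⊗ₜ[k] e)) = x := by
  induction x using TensorProduct.induction_on with
  | zero => simp
  | tmul a v =>
      rw [brzMul_tmul, bLam_tmul, h.brz1b, bPhi_tmul, h.brz2b, smul_tmul_AV, smul_tmul_AV,
        one_mul, mul_one]
  | add x y hx hy => rw [add_tmul, map_add, hx, hy]

lemma brz_prod (a b : A) (v : V) :
    brzMul k A V R σ ((a ⊗ₜ[k] e) ⊗ₜ[k] (b ⊗ₜ[k] v)) = (a * b) ⊗ₜ[k] v := by
  rw [brzMul_tmul, bLam_tmul, h.brz1a, bPhi_tmul, h.brz2a, smul_tmul_AV, mul_one,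
    smul_tmul_AV]

lemma brz_assoc (x y z : A ⊗[k] V) :
    brzMul k A V R σ (brzMul k A V R σ (x ⊗ₜ[k] y) ⊗ₜ[k] z)
      = brzMul k A V R σ (x ⊗ₜ[k] brzMul k A V R σ (y ⊗ₜ[k] z)) := by
  induction x using TensorProduct.induction_on with
  | zero => simp
  | add x₁ x₂ hx₁ hx₂ => rw [add_tmul, map_add, add_tmul, map_add, hx₁, hx₂, add_tmul,
      map_add]
  | tmul a u =>
    induction y using TensorProduct.induction_on with
    | zero => simp
    | add y₁ y₂ hy₁ hy₂ => rw [tmul_add, map_add, add_tmul, map_add, hy₁, hy₂, add_tmul,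
        map_add, tmul_add, map_add]
    | tmul b v =>
      induction z using TensorProduct.induction_on with
      | zero => simp
      | add z₁ z₂ hz₁ hz₂ => rw [tmul_add, map_add, hz₁, hz₂, tmul_add, map_add,
          tmul_add, map_add]
      | tmul c w =>
        rw [brzMul_tmul, brzMul_smul, brzMul_CB, bLam_tmul, chaseCE h,
          brzMul_tmul, brzMul_tmul, ← bLam_smul h]

end WithData


section Converse
variable {k} {e : V} (m : (A ⊗[k] V) ⊗[k] (A ⊗[k] V) →ₗ[k] A ⊗[k] V)
variable (hL : ∀ x, m (((1 : A) ⊗ₜ[k] e) ⊗ₜ[k] x) = x)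
variable (hR : ∀ x, m (x ⊗ₜ[k] ((1 : A) ⊗ₜ[k] e)) = x)
variable (hA : ∀ x y z, m (m (x ⊗ₜ[k] y) ⊗ₜ[k] z) = m (x ⊗ₜ[k] m (y ⊗ₜ[k] z)))
variable (hP : ∀ (a b : A) (v : V), m ((a ⊗ₜ[k] e) ⊗ₜ[k] (b ⊗ₜ[k] v)) = (a * b) ⊗ₜ[k] v)

/-- `σ` extracted from `m`. -/
def sigOf : V ⊗[k] V →ₗ[k] A ⊗[k] V :=
  m ∘ₗ TensorProduct.map (TensorProduct.mk k A V 1) (TensorProduct.mk k A V 1)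

/-- `R` extracted from `m`. -/
def ROf : V ⊗[k] A →ₗ[k] A ⊗[k] V :=
  m ∘ₗ TensorProduct.map (TensorProduct.mk k A V 1) ((TensorProduct.mk k A V).flip e)

lemma sigOf_tmul (v w : V) :
    sigOf m (v ⊗ₜ[k] w) = m (((1 : A) ⊗ₜ[k] v) ⊗ₜ[k] ((1 : A) ⊗ₜ[k] w)) := by
  simp [sigOf]

lemma ROf_tmul (v : V) (a : A) :
    ROf (e := e) m (v ⊗ₜ[k] a) = m (((1 : A) ⊗ₜ[k] v) ⊗ₜ[k] (a ⊗ₜ[k] e)) := by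
  simp [ROf]

include hP in
lemma mF2 (a : A) (z : A ⊗[k] V) : m ((a ⊗ₜ[k] e) ⊗ₜ[k] z) = a • z := by
  induction z using TensorProduct.induction_on with
  | zero => simp
  | tmul b v => rw [hP, smul_tmul_AV]
  | add x y hx hy => rw [tmul_add, map_add, hx, hy, smul_add]

include hA hP in
lemma mF3 (a : A) (s t : A ⊗[k] V) : m ((a • s) ⊗ₜ[k] t) = a • m (s ⊗ₜ[k] t) := by
  rw [← mF2 m hP a s, hA, mF2 m hP]

include hA hP in
lemma mG5 (y : A ⊗[k] V) (w : V) :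
    bPhi k (sigOf m) (y ⊗ₜ[k] w) = m (y ⊗ₜ[k] ((1 : A) ⊗ₜ[k] w)) := by
  induction y using TensorProduct.induction_on with
  | zero => simp
  | tmul p q =>
      rw [bPhi_tmul, sigOf_tmul,
        show p ⊗ₜ[k] q = p • ((1 : A) ⊗ₜ[k] q) by rw [smul_tmul_AV, mul_one],
        mF3 m hA hP]
  | add x y hx hy => rw [add_tmul, map_add, hx, hy, add_tmul, map_add]

include hA hP in
lemma mG3 (y : A ⊗[k] V) (b : A) :
    bPsi k (ROf (e := e) m) (y ⊗ₜ[k] b) = m (y ⊗ₜ[k] (b ⊗ₜ[k] e)) := by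
  induction y using TensorProduct.induction_on with
  | zero => simp
  | tmul p q =>
      rw [bPsi_tmul, ROf_tmul,
        show p ⊗ₜ[k] q = p • ((1 : A) ⊗ₜ[k] q) by rw [smul_tmul_AV, mul_one],
        mF3 m hA hP]
  | add x y hx hy => rw [add_tmul, map_add, hx, hy, add_tmul, map_add]

include hA hP in
lemma mG4 (u : V) (ζ : A ⊗[k] V) :
    bLam k (ROf (e := e) m) (sigOf m) (u ⊗ₜ[k] ζ) = m (((1 : A) ⊗ₜ[k] u) ⊗ₜ[k] ζ) := by
  induction ζ using TensorProduct.induction_on with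
  | zero => simp
  | tmul b w =>
      rw [bLam_tmul, mG5 m hA hP, ROf_tmul, hA, mF2 m hP, smul_tmul_AV, mul_one]
  | add x y hx hy => rw [tmul_add, map_add, hx, hy, tmul_add, map_add]

include hL hR hA hP in
lemma converse_isBrzData :
    IsBrzData k A V e (ROf (e := e) m) (sigOf m) := by
  constructor
  · intro a; rw [ROf_tmul, hL]
  · intro v; rw [ROf_tmul, hR]
  · intro v; rw [sigOf_tmul, hL]
  · intro v; rw [sigOf_tmul, hR]
  · -- brz3
    have : (ROf (e := e) m) ∘ₗ lTensor V (mul' k A) ∘ₗ α k V A A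
        = bPsi k (ROf (e := e) m) ∘ₗ rTensor A (ROf (e := e) m) := by
      apply TensorProduct.ext_threefold
      intro v a b
      simp only [comp_apply, LinearEquiv.coe_coe, assoc_tmul, lTensor_tmul, rTensor_tmul,
        mul'_apply]
      rw [mG3 m hA hP, ROf_tmul, ROf_tmul, hA, hP]
    exact this
  · -- brz4
    have : bLam k (ROf (e := e) m) (sigOf m) ∘ₗ lTensor V (sigOf m) ∘ₗ α k V V V
        = bPhi k (sigOf m) ∘ₗ rTensor V (sigOf m) := by
      apply TensorProduct.ext_threefold
      intro u v w
      simp only [comp_apply, LinearEquiv.coe_coe, assoc_tmul, lTensor_tmul, rTensor_tmul]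
      rw [mG4 m hA hP, mG5 m hA hP, sigOf_tmul, sigOf_tmul, hA]
    exact this
  · -- brz5
    have : bLam k (ROf (e := e) m) (sigOf m) ∘ₗ lTensor V (ROf (e := e) m) ∘ₗ α k V V A
        = bPsi k (ROf (e := e) m) ∘ₗ rTensor A (sigOf m) := by
      apply TensorProduct.ext_threefold
      intro u v a
      simp only [comp_apply, LinearEquiv.coe_coe, assoc_tmul, lTensor_tmul, rTensor_tmul]
      rw [mG4 m hA hP, mG3 m hA hP, ROf_tmul, sigOf_tmul, hA]
    exact this

include hA hP in
lemma converse_mul_eq :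
    m = brzMul k A V (ROf (e := e) m) (sigOf m) := by
  apply TensorProduct.ext'
  intro x z
  induction x using TensorProduct.induction_on with
  | zero => simp
  | tmul a v =>
      rw [brzMul_tmul, mG4 m hA hP, ← mF3 m hA hP, smul_tmul_AV, mul_one]
  | add x y hx hy => rw [add_tmul, map_add, map_add, hx, hy]

end Converse

end BrzAux

/-- Brzeziński's theorem. `A ⊗ V` admits an associative unital algebra
structure with unit `1_A ⊗ 1_V` whose multiplication satisfies
`(a ⊗ 1_V)(b ⊗ v) = ab ⊗ v` iff there are maps `σ`, `R` satisfying (brz1)-(brz5);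
in that case the multiplication is `(μ₂ ⊗ id)∘(id ⊗ id ⊗ σ)∘(id ⊗ R ⊗ id)`. -/
theorem brzezinski_crossed_product_characterization
    (A V : Type*) [Ring A] [Algebra k A] [AddCommGroup V] [Module k V] (e : V) :
    (∀ m : (A ⊗[k] V) ⊗[k] (A ⊗[k] V) →ₗ[k] A ⊗[k] V,
      ((∀ x, m (((1 : A) ⊗ₜ[k] e) ⊗ₜ[k] x) = x) ∧
       (∀ x, m (x ⊗ₜ[k] ((1 : A) ⊗ₜ[k] e)) = x) ∧
       (∀ x y z, m (m (x ⊗ₜ[k] y) ⊗ₜ[k] z) = m (x ⊗ₜ[k] m (y ⊗ₜ[k] z))) ∧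
       (∀ (a b : A) (v : V), m ((a ⊗ₜ[k] e) ⊗ₜ[k] (b ⊗ₜ[k] v)) = (a * b) ⊗ₜ[k] v)) →
      ∃ (σ : V ⊗[k] V →ₗ[k] A ⊗[k] V) (R : V ⊗[k] A →ₗ[k] A ⊗[k] V),
        IsBrzData k A V e R σ ∧ m = brzMul k A V R σ) ∧
    (∀ (σ : V ⊗[k] V →ₗ[k] A ⊗[k] V) (R : V ⊗[k] A →ₗ[k] A ⊗[k] V),
      IsBrzData k A V e R σ →
      ((∀ x, brzMul k A V R σ (((1 : A) ⊗ₜ[k] e) ⊗ₜ[k] x) = x) ∧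
       (∀ x, brzMul k A V R σ (x ⊗ₜ[k] ((1 : A) ⊗ₜ[k] e)) = x) ∧
       (∀ x y z, brzMul k A V R σ (brzMul k A V R σ (x ⊗ₜ[k] y) ⊗ₜ[k] z)
          = brzMul k A V R σ (x ⊗ₜ[k] brzMul k A V R σ (y ⊗ₜ[k] z))) ∧
       (∀ (a b : A) (v : V),
          brzMul k A V R σ ((a ⊗ₜ[k] e) ⊗ₜ[k] (b ⊗ₜ[k] v)) = (a * b) ⊗ₜ[k] v))) := by
  constructor
  · intro m hm
    obtain ⟨hL, hR, hA, hP⟩ := hm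
    exact ⟨sigOf m, ROf (e := e) m, converse_isBrzData m hL hR hA hP,
      converse_mul_eq m hA hP⟩
  · intro σ R h
    exact ⟨brz_unit_left h, brz_unit_right h, brz_assoc h, brz_prod h⟩
end TwoSidedCP
end
end

section
/- Let (B, μ, 1_B) be an associative unital algebra over a field k and W a k-vector space with a distinguished element 1_W∈W. The vector space W⊗B admits an associative algebra structure with unit 1_W⊗1_B whose multiplication satisfies (w⊗b)(1_W⊗b') = w⊗bb' for all b,b'∈B and w∈W, if and only if there exist linear maps ν: W⊗W → W⊗B and P: B⊗W → W⊗B satisfying the mirror crossed product conditions (mir0)–(mir4); in that case the multiplication is given by μ_{W⊗B} = (id_W⊗μ₂)∘(ν⊗id_B⊗id_B)∘(id_W⊗P⊗id_B), where μ₂ = μ∘(id_B⊗μ) = μ∘(μ⊗id_B). -/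
open TensorProduct LinearMap

set_option maxHeartbeats 1000000
set_option synthInstance.maxHeartbeats 400000

noncomputable section

namespace TwoSidedCP

variable (k : Type*) [Field k]

section MirrorAux

variable (W B : Type*) [Ring B] [Algebra k B] [AddCommGroup W] [Module k W]

/-- Right multiplication by `c` on the `B`-factor of `W ⊗ B`. -/
def rmulW (c : B) : W ⊗[k] B →ₗ[k] W ⊗[k] B := lTensor W (LinearMap.mulRight k c)

/-- The map `S : B ⊗ (W ⊗ B) → W ⊗ B`, `S(b ⊗ (w ⊗ c)) = P(b ⊗ w)·c`. -/
def mS (P : B ⊗[k] W →ₗ[k] W ⊗[k] B) : B ⊗[k] (W ⊗[k] B) →ₗ[k] W ⊗[k] B :=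
  lTensor W (mul' k B) ∘ₗ α k W B B ∘ₗ rTensor B P ∘ₗ α' k B W B

/-- The map `T : W ⊗ (W ⊗ B) → W ⊗ B`, `T(w ⊗ (w' ⊗ c)) = ν(w ⊗ w')·c`. -/
def mT (ν : W ⊗[k] W →ₗ[k] W ⊗[k] B) : W ⊗[k] (W ⊗[k] B) →ₗ[k] W ⊗[k] B :=
  lTensor W (mul' k B) ∘ₗ α k W B B ∘ₗ rTensor B ν ∘ₗ α' k W W B

/-- The map `G : (W ⊗ B) ⊗ W → W ⊗ B`, `G((w ⊗ b) ⊗ v) = T(w ⊗ P(b ⊗ v))`. -/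
def mG (P : B ⊗[k] W →ₗ[k] W ⊗[k] B) (ν : W ⊗[k] W →ₗ[k] W ⊗[k] B) :
    (W ⊗[k] B) ⊗[k] W →ₗ[k] W ⊗[k] B :=
  mT k W B ν ∘ₗ lTensor W P ∘ₗ α k W B W

variable {W B}
variable (P : B ⊗[k] W →ₗ[k] W ⊗[k] B) (ν : W ⊗[k] W →ₗ[k] W ⊗[k] B)

@[simp] lemma rmulW_tmul (c : B) (w : W) (b : B) :
    rmulW k W B c (w ⊗ₜ[k] b) = w ⊗ₜ[k] (b * c) := by
  simp [rmulW]

lemma rmulW_rmulW (c d : B) (x : W ⊗[k] B) :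
    rmulW k W B c (rmulW k W B d x) = rmulW k W B (d * c) x := by
  induction x using TensorProduct.induction_on with
  | zero => simp
  | tmul w b => simp [mul_assoc]
  | add x y hx hy => simp [hx, hy]

lemma lTensor_mul'_alpha (x : W ⊗[k] B) (c : B) :
    lTensor W (mul' k B) (α k W B B (x ⊗ₜ[k] c)) = rmulW k W B c x := by
  induction x using TensorProduct.induction_on with
  | zero => simp
  | tmul w b => simp
  | add x y hx hy =>
      simp only [add_tmul, map_add, LinearEquiv.coe_coe] at hx hy ⊢
      rw [hx, hy]

lemma mS_tmul (b : B) (w : W) (c : B) :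
    mS k W B P (b ⊗ₜ[k] (w ⊗ₜ[k] c)) = rmulW k W B c (P (b ⊗ₜ[k] w)) := by
  simp only [mS, comp_apply, LinearEquiv.coe_coe, assoc_symm_tmul, rTensor_tmul]
  exact lTensor_mul'_alpha k _ c

lemma mT_tmul (w w' : W) (c : B) :
    mT k W B ν (w ⊗ₜ[k] (w' ⊗ₜ[k] c)) = rmulW k W B c (ν (w ⊗ₜ[k] w')) := by
  simp only [mT, comp_apply, LinearEquiv.coe_coe, assoc_symm_tmul, rTensor_tmul]
  exact lTensor_mul'_alpha k _ c

lemma mG_tmul (w : W) (b : B) (v : W) :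
    mG k W B P ν ((w ⊗ₜ[k] b) ⊗ₜ[k] v) = mT k W B ν (w ⊗ₜ[k] P (b ⊗ₜ[k] v)) := by
  simp only [mG, comp_apply, LinearEquiv.coe_coe, assoc_tmul, lTensor_tmul]

lemma mirMul_tmul (w : W) (b : B) (x : W ⊗[k] B) :
    mirMul k W B (mul' k B) P ν ((w ⊗ₜ[k] b) ⊗ₜ[k] x)
      = mT k W B ν (w ⊗ₜ[k] mS k W B P (b ⊗ₜ[k] x)) := by
  induction x using TensorProduct.induction_on with
  | zero => simp [tmul_zero]
  | tmul w' b' =>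
      simp only [mirMul, comp_apply, LinearEquiv.coe_coe, assoc_tmul, lTensor_tmul,
        assoc_symm_tmul, rTensor_tmul, mS_tmul]
      generalize P (b ⊗ₜ[k] w') = ξ
      induction ξ using TensorProduct.induction_on with
      | zero => simp [tmul_zero]
      | tmul u c =>
          simp only [LinearEquiv.coe_coe, assoc_tmul, assoc_symm_tmul, rTensor_tmul,
            lTensor_tmul, rmulW_tmul, mT_tmul]
          generalize ν (w ⊗ₜ[k] u) = η
          induction η using TensorProduct.induction_on with
          | zero => simp
          | tmul v d => simp [mul_assoc]
          | add x y hx hy => simp [add_tmul, hx, hy]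
      | add x y hx hy => simp only [tmul_add, add_tmul, map_add, hx, hy]
  | add x y hx hy => simp only [tmul_add, map_add, hx, hy]

lemma rmulW_mS (c : B) (b : B) (x : W ⊗[k] B) :
    rmulW k W B c (mS k W B P (b ⊗ₜ[k] x)) = mS k W B P (b ⊗ₜ[k] rmulW k W B c x) := by
  induction x using TensorProduct.induction_on with
  | zero => simp [tmul_zero]
  | tmul u d => simp [mS_tmul, rmulW_rmulW]
  | add x y hx hy => simp only [tmul_add, map_add, hx, hy]

lemma rmulW_mT (c : B) (w : W) (x : W ⊗[k] B) :
    rmulW k W B c (mT k W B ν (w ⊗ₜ[k] x)) = mT k W B ν (w ⊗ₜ[k] rmulW k W B c x) := by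
  induction x using TensorProduct.induction_on with
  | zero => simp [tmul_zero]
  | tmul u d => simp [mT_tmul, rmulW_rmulW]
  | add x y hx hy => simp only [tmul_add, map_add, hx, hy]

lemma m_rG (x : W ⊗[k] B) (v : W) (c : B) :
    mirMul k W B (mul' k B) P ν (x ⊗ₜ[k] (v ⊗ₜ[k] c))
      = rmulW k W B c (mG k W B P ν (x ⊗ₜ[k] v)) := by
  induction x using TensorProduct.induction_on with
  | zero => simp [zero_tmul]
  | tmul s d =>
      rw [mirMul_tmul, mG_tmul, mS_tmul, rmulW_mT]
  | add x y hx hy => simp only [add_tmul, map_add, hx, hy]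

section Data
variable (e : W) (md : IsMirrorData k W B (mul' k B) 1 e P ν)
include md

lemma mir2_pt (b c : B) (w : W) :
    P ((b * c) ⊗ₜ[k] w) = mS k W B P (b ⊗ₜ[k] P (c ⊗ₜ[k] w)) := by
  have H2 : P ∘ₗ rTensor W (mul' k B) = mS k W B P ∘ₗ lTensor B P ∘ₗ α k B B W := md.mir2
  have h := LinearMap.congr_fun H2 ((b ⊗ₜ[k] c) ⊗ₜ[k] w)
  simpa only [comp_apply, LinearEquiv.coe_coe, assoc_tmul, rTensor_tmul, lTensor_tmul,
    mul'_apply] using h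

lemma mir3_pt (w w' v : W) :
    mG k W B P ν (ν (w ⊗ₜ[k] w') ⊗ₜ[k] v) = mT k W B ν (w ⊗ₜ[k] ν (w' ⊗ₜ[k] v)) := by
  have H3 : mG k W B P ν ∘ₗ rTensor W ν = mT k W B ν ∘ₗ lTensor W ν ∘ₗ α k W W W := md.mir3
  have h := LinearMap.congr_fun H3 ((w ⊗ₜ[k] w') ⊗ₜ[k] v)
  simpa only [comp_apply, LinearEquiv.coe_coe, assoc_tmul, rTensor_tmul, lTensor_tmul] using h

lemma mir4_pt (b : B) (w' v : W) :
    mG k W B P ν (P (b ⊗ₜ[k] w') ⊗ₜ[k] v) = mS k W B P (b ⊗ₜ[k] ν (w' ⊗ₜ[k] v)) := by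
  have H4 : mG k W B P ν ∘ₗ rTensor W P = mS k W B P ∘ₗ lTensor B ν ∘ₗ α k B W W := md.mir4
  have h := LinearMap.congr_fun H4 ((b ⊗ₜ[k] w') ⊗ₜ[k] v)
  simpa only [comp_apply, LinearEquiv.coe_coe, assoc_tmul, rTensor_tmul, lTensor_tmul] using h

lemma mS_one (x : W ⊗[k] B) : mS k W B P (1 ⊗ₜ[k] x) = x := by
  induction x using TensorProduct.induction_on with
  | zero => simp [tmul_zero]
  | tmul w c => simp [mS_tmul, md.mir0b, one_mul]
  | add x y hx hy => simp only [tmul_add, map_add, hx, hy]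

lemma mT_e (x : W ⊗[k] B) : mT k W B ν (e ⊗ₜ[k] x) = x := by
  induction x using TensorProduct.induction_on with
  | zero => simp [tmul_zero]
  | tmul w c => simp [mT_tmul, md.mir1b, one_mul]
  | add x y hx hy => simp only [tmul_add, map_add, hx, hy]

lemma mS_mul (b c : B) (x : W ⊗[k] B) :
    mS k W B P ((b * c) ⊗ₜ[k] x) = mS k W B P (b ⊗ₜ[k] mS k W B P (c ⊗ₜ[k] x)) := by
  induction x using TensorProduct.induction_on with
  | zero => simp [tmul_zero]
  | tmul v d =>
      rw [mS_tmul, mir2_pt k P ν e md, rmulW_mS, mS_tmul]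
  | add x y hx hy => simp only [tmul_add, map_add, hx, hy]

lemma m_rmulLeft (c : B) (x : W ⊗[k] B) (z : W ⊗[k] B) :
    mirMul k W B (mul' k B) P ν (rmulW k W B c x ⊗ₜ[k] z)
      = mirMul k W B (mul' k B) P ν (x ⊗ₜ[k] mS k W B P (c ⊗ₜ[k] z)) := by
  induction x using TensorProduct.induction_on with
  | zero => simp [zero_tmul]
  | tmul v d =>
      rw [rmulW_tmul, mirMul_tmul, mS_mul k P ν e md, ← mirMul_tmul]
  | add x y hx hy => simp only [add_tmul, map_add, hx, hy]

lemma m_nu (w u : W) (z : W ⊗[k] B) :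
    mirMul k W B (mul' k B) P ν (ν (w ⊗ₜ[k] u) ⊗ₜ[k] z)
      = mT k W B ν (w ⊗ₜ[k] mT k W B ν (u ⊗ₜ[k] z)) := by
  induction z using TensorProduct.induction_on with
  | zero => simp [tmul_zero]
  | tmul v c =>
      rw [m_rG, mir3_pt k P ν e md, mT_tmul, rmulW_mT]
  | add x y hx hy => simp only [tmul_add, map_add, hx, hy]

lemma m_P (b : B) (w' : W) (z : W ⊗[k] B) :
    mirMul k W B (mul' k B) P ν (P (b ⊗ₜ[k] w') ⊗ₜ[k] z)
      = mS k W B P (b ⊗ₜ[k] mT k W B ν (w' ⊗ₜ[k] z)) := by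
  induction z using TensorProduct.induction_on with
  | zero => simp [tmul_zero]
  | tmul v c =>
      rw [m_rG, mir4_pt k P ν e md, mT_tmul, rmulW_mS]
  | add x y hx hy => simp only [tmul_add, map_add, hx, hy]

lemma m_mT (w : W) (θ z : W ⊗[k] B) :
    mirMul k W B (mul' k B) P ν (mT k W B ν (w ⊗ₜ[k] θ) ⊗ₜ[k] z)
      = mT k W B ν (w ⊗ₜ[k] mirMul k W B (mul' k B) P ν (θ ⊗ₜ[k] z)) := by
  induction θ using TensorProduct.induction_on with
  | zero => simp [tmul_zero, zero_tmul]
  | tmul u c =>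
      rw [mT_tmul, m_rmulLeft k P ν e md, m_nu k P ν e md, mirMul_tmul]
  | add x y hx hy => simp only [tmul_add, add_tmul, map_add, hx, hy]

lemma m_mS (b : B) (y z : W ⊗[k] B) :
    mirMul k W B (mul' k B) P ν (mS k W B P (b ⊗ₜ[k] y) ⊗ₜ[k] z)
      = mS k W B P (b ⊗ₜ[k] mirMul k W B (mul' k B) P ν (y ⊗ₜ[k] z)) := by
  induction y using TensorProduct.induction_on with
  | zero => simp [tmul_zero, zero_tmul]
  | tmul w' b' =>
      rw [mS_tmul, m_rmulLeft k P ν e md, m_P k P ν e md, mirMul_tmul]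
  | add x y hx hy => simp only [tmul_add, add_tmul, map_add, hx, hy]

lemma m_assoc (x y z : W ⊗[k] B) :
    mirMul k W B (mul' k B) P ν (mirMul k W B (mul' k B) P ν (x ⊗ₜ[k] y) ⊗ₜ[k] z)
      = mirMul k W B (mul' k B) P ν (x ⊗ₜ[k] mirMul k W B (mul' k B) P ν (y ⊗ₜ[k] z)) := by
  induction x using TensorProduct.induction_on with
  | zero => simp [zero_tmul]
  | tmul w b =>
      rw [mirMul_tmul, m_mT k P ν e md, m_mS k P ν e md, ← mirMul_tmul]
  | add x y hx hy => simp only [add_tmul, map_add, hx, hy]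

end Data

end MirrorAux

/-- the mirror version of Brzeziński's theorem. `W ⊗ B` admits an
associative unital algebra structure with unit `1_W ⊗ 1_B` whose multiplication
satisfies `(w ⊗ b)(1_W ⊗ b') = w ⊗ bb'` iff there are maps `ν`, `P` satisfying
(mir0)-(mir4); in that case the multiplication is
`(id ⊗ μ₂)∘(ν ⊗ id ⊗ id)∘(id ⊗ P ⊗ id)`. -/
theorem mirror_crossed_product_characterization
    (B W : Type*) [Ring B] [Algebra k B] [AddCommGroup W] [Module k W] (e : W) :
    (∀ m : (W ⊗[k] B) ⊗[k] (W ⊗[k] B) →ₗ[k] W ⊗[k] B,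
      ((∀ x, m ((e ⊗ₜ[k] (1 : B)) ⊗ₜ[k] x) = x) ∧
       (∀ x, m (x ⊗ₜ[k] (e ⊗ₜ[k] (1 : B))) = x) ∧
       (∀ x y z, m (m (x ⊗ₜ[k] y) ⊗ₜ[k] z) = m (x ⊗ₜ[k] m (y ⊗ₜ[k] z))) ∧
       (∀ (w : W) (b b' : B), m ((w ⊗ₜ[k] b) ⊗ₜ[k] (e ⊗ₜ[k] b')) = w ⊗ₜ[k] (b * b'))) →
      ∃ (ν : W ⊗[k] W →ₗ[k] W ⊗[k] B) (P : B ⊗[k] W →ₗ[k] W ⊗[k] B),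
        IsMirrorData k W B (mul' k B) 1 e P ν ∧ m = mirMul k W B (mul' k B) P ν) ∧
    (∀ (ν : W ⊗[k] W →ₗ[k] W ⊗[k] B) (P : B ⊗[k] W →ₗ[k] W ⊗[k] B),
      IsMirrorData k W B (mul' k B) 1 e P ν →
      ((∀ x, mirMul k W B (mul' k B) P ν ((e ⊗ₜ[k] (1 : B)) ⊗ₜ[k] x) = x) ∧
       (∀ x, mirMul k W B (mul' k B) P ν (x ⊗ₜ[k] (e ⊗ₜ[k] (1 : B))) = x) ∧
       (∀ x y z,
          mirMul k W B (mul' k B) P ν (mirMul k W B (mul' k B) P ν (x ⊗ₜ[k] y) ⊗ₜ[k] z)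
            = mirMul k W B (mul' k B) P ν (x ⊗ₜ[k] mirMul k W B (mul' k B) P ν (y ⊗ₜ[k] z))) ∧
       (∀ (w : W) (b b' : B),
          mirMul k W B (mul' k B) P ν ((w ⊗ₜ[k] b) ⊗ₜ[k] (e ⊗ₜ[k] b'))
            = w ⊗ₜ[k] (b * b')))) := by
  constructor
  · intro m hprops
    obtain ⟨hl, hr, ha, h4⟩ := hprops
    set jW : W →ₗ[k] W ⊗[k] B := (TensorProduct.mk k W B).flip 1 with hjW
    set ν : W ⊗[k] W →ₗ[k] W ⊗[k] B := m ∘ₗ TensorProduct.map jW jW with hν0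
    set P : B ⊗[k] W →ₗ[k] W ⊗[k] B :=
      m ∘ₗ TensorProduct.map (TensorProduct.mk k W B e) jW with hP0
    have hν : ∀ w w' : W,
        ν (w ⊗ₜ[k] w') = m ((w ⊗ₜ[k] (1 : B)) ⊗ₜ[k] (w' ⊗ₜ[k] (1 : B))) := by
      intro w w'
      rw [hν0]
      simp [hjW]
    have hP : ∀ (b : B) (w : W),
        P (b ⊗ₜ[k] w) = m ((e ⊗ₜ[k] b) ⊗ₜ[k] (w ⊗ₜ[k] (1 : B))) := by
      intro b w
      rw [hP0]
      simp [hjW]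
    have hre : ∀ (x : W ⊗[k] B) (c : B), m (x ⊗ₜ[k] (e ⊗ₜ[k] c)) = rmulW k W B c x := by
      intro x c
      induction x using TensorProduct.induction_on with
      | zero => simp [zero_tmul]
      | tmul w b => rw [h4, rmulW_tmul]
      | add x y hx hy => simp only [add_tmul, map_add, hx, hy]
    have hS : ∀ (b : B) (z : W ⊗[k] B),
        mS k W B P (b ⊗ₜ[k] z) = m ((e ⊗ₜ[k] b) ⊗ₜ[k] z) := by
      intro b z
      induction z using TensorProduct.induction_on with
      | zero => simp [tmul_zero]
      | tmul v c =>
          rw [mS_tmul, hP, ← hre, ha, h4, one_mul]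
      | add x y hx hy => simp only [tmul_add, map_add, hx, hy]
    have hT : ∀ (w : W) (z : W ⊗[k] B),
        mT k W B ν (w ⊗ₜ[k] z) = m ((w ⊗ₜ[k] (1 : B)) ⊗ₜ[k] z) := by
      intro w z
      induction z using TensorProduct.induction_on with
      | zero => simp [tmul_zero]
      | tmul v c =>
          rw [mT_tmul, hν, ← hre, ha, h4, one_mul]
      | add x y hx hy => simp only [tmul_add, map_add, hx, hy]
    have hG : ∀ (x : W ⊗[k] B) (v : W),
        mG k W B P ν (x ⊗ₜ[k] v) = m (x ⊗ₜ[k] (v ⊗ₜ[k] (1 : B))) := by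
      intro x v
      induction x using TensorProduct.induction_on with
      | zero => simp [zero_tmul]
      | tmul u c =>
          rw [mG_tmul, hT, hP, ← ha, h4, one_mul]
      | add x y hx hy => simp only [add_tmul, map_add, hx, hy]
    have hm : ∀ (w : W) (b : B) (z : W ⊗[k] B),
        m ((w ⊗ₜ[k] b) ⊗ₜ[k] z) = mT k W B ν (w ⊗ₜ[k] mS k W B P (b ⊗ₜ[k] z)) := by
      intro w b z
      rw [hS, hT, ← ha, h4, one_mul]
    refine ⟨ν, P, ⟨?_, ?_, ?_, ?_, ?_, ?_, ?_⟩, ?_⟩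
    · intro b
      rw [hP]
      exact hr _
    · intro w
      rw [hP]
      exact hl _
    · intro w
      rw [hν]
      exact hr _
    · intro w
      rw [hν]
      exact hl _
    · show P ∘ₗ rTensor W (mul' k B) = mS k W B P ∘ₗ lTensor B P ∘ₗ α k B B W
      ext b c w
      simp only [AlgebraTensorModule.curry_apply, curry_apply, coe_restrictScalars,
        comp_apply, LinearEquiv.coe_coe, assoc_tmul, lTensor_tmul, rTensor_tmul,
        mul'_apply]
      rw [hP, hS, hP, ← ha, h4]
    · show mG k W B P ν ∘ₗ rTensor W ν = mT k W B ν ∘ₗ lTensor W ν ∘ₗ α k W W W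
      ext w w' v
      simp only [AlgebraTensorModule.curry_apply, curry_apply, coe_restrictScalars,
        comp_apply, LinearEquiv.coe_coe, assoc_tmul, lTensor_tmul, rTensor_tmul]
      rw [hG, hT, hν, hν, ha]
    · show mG k W B P ν ∘ₗ rTensor W P = mS k W B P ∘ₗ lTensor B ν ∘ₗ α k B W W
      ext b w' v
      simp only [AlgebraTensorModule.curry_apply, curry_apply, coe_restrictScalars,
        comp_apply, LinearEquiv.coe_coe, assoc_tmul, lTensor_tmul, rTensor_tmul]
      rw [hG, hS, hP, hν, ha]
    · ext w b w' b'
      simp only [AlgebraTensorModule.curry_apply, curry_apply, coe_restrictScalars]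
      rw [mirMul_tmul, hm]
  · intro ν P md
    refine ⟨?_, ?_, ?_, ?_⟩
    · intro x
      rw [mirMul_tmul, mS_one k P ν e md, mT_e k P ν e md]
    · intro x
      induction x using TensorProduct.induction_on with
      | zero => simp [zero_tmul]
      | tmul w b =>
          rw [mirMul_tmul, mS_tmul, md.mir0a, rmulW_tmul, mul_one, mT_tmul, md.mir1a,
            rmulW_tmul, one_mul]
      | add x y hx hy => simp only [add_tmul, map_add, hx, hy]
    · intro x y z
      exact m_assoc k P ν e md x y z
    · intro w b b'
      rw [mirMul_tmul, mS_tmul, md.mir0a, rmulW_tmul, mT_tmul, md.mir1a, rmulW_tmul, one_mul]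
end TwoSidedCP
end
end

section
/- Let (A, V, C, R1, R2, R3, E) be two-sided crossed product data over a field k. Define P: C⊗(A⊗V) → (A⊗V)⊗C by P = (id_A⊗R2)∘(R3⊗id_V) and ν: (A⊗V)⊗(A⊗V) → (A⊗V)⊗C by ν = (μ_A⊗id_V⊗id_C)∘(μ_A⊗E)∘(id_A⊗R1⊗id_V), i.e. ν((a⊗v)⊗(a'⊗v')) = (a a'_{R1} E_A(v_{R1}, v') ⊗ E_V(v_{R1}, v')) ⊗ E_C(v_{R1}, v'). Then P and ν satisfy the mirror crossed product conditions (mir0)–(mir4) with base algebra C and vector space A⊗V with distinguished element 1_A⊗1_V, so the mirror crossed product (A⊗V)⊗̄_{P,ν}C exists. -/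
open TensorProduct LinearMap

set_option maxHeartbeats 1000000
set_option synthInstance.maxHeartbeats 400000

noncomputable section

namespace TwoSidedCP

variable (k : Type*) [Field k]

section Proof
variable {k : Type*} [Field k]

section Rep
variable {M N P : Type*} [AddCommGroup M] [Module k M] [AddCommGroup N] [Module k N]
  [AddCommGroup P] [Module k P]

lemma sum_shift {γ : Type*} [AddCommMonoid γ] (s s' : Finset ℕ) (F G : ℕ → γ) :
    ∑ i ∈ s, F i + ∑ i ∈ s', G i
      = ∑ i ∈ s ∪ s'.image (· + (s.sup id + 1)),
          if i < s.sup id + 1 then F i else G (i - (s.sup id + 1)) := by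
  rw [Finset.sum_union]
  · congr 1
    · exact Finset.sum_congr rfl fun i hi => by
        have : i ≤ s.sup id := Finset.le_sup (f := id) hi
        rw [if_pos (by omega)]
    · rw [Finset.sum_image (fun x _ y _ hxy => by omega)]
      exact Finset.sum_congr rfl fun i _ => by
        rw [if_neg (by omega), Nat.add_sub_cancel]
  · rw [Finset.disjoint_right]
    intro i hi hmem
    obtain ⟨j, _, rfl⟩ := Finset.mem_image.mp hi
    have := Finset.le_sup (f := id) hmem
    simp only [id_eq] at this
    omega

lemma rep2 (t : M ⊗[k] N) :
    ∃ (s : Finset ℕ) (f : ℕ → M) (g : ℕ → N), t = ∑ i ∈ s, f i ⊗ₜ[k] g i := by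
  induction t using TensorProduct.induction_on with
  | zero => exact ⟨∅, 0, 0, by simp⟩
  | tmul m n => exact ⟨{0}, fun _ => m, fun _ => n, by simp⟩
  | add x y hx hy =>
    obtain ⟨s, f, g, rfl⟩ := hx
    obtain ⟨s', f', g', rfl⟩ := hy
    refine ⟨s ∪ s'.image (· + (s.sup id + 1)),
      fun i => if i < s.sup id + 1 then f i else f' (i - (s.sup id + 1)),
      fun i => if i < s.sup id + 1 then g i else g' (i - (s.sup id + 1)), ?_⟩
    rw [sum_shift s s' (fun i => f i ⊗ₜ[k] g i) (fun i => f' i ⊗ₜ[k] g' i)]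
    exact Finset.sum_congr rfl fun i _ => by dsimp only; split_ifs <;> rfl

lemma rep3 (t : (M ⊗[k] N) ⊗[k] P) :
    ∃ (s : Finset ℕ) (f : ℕ → M) (g : ℕ → N) (p : ℕ → P),
      t = ∑ i ∈ s, (f i ⊗ₜ[k] g i) ⊗ₜ[k] p i := by
  induction t using TensorProduct.induction_on with
  | zero => exact ⟨∅, 0, 0, 0, by simp⟩
  | tmul x q =>
    obtain ⟨s, f, g, rfl⟩ := rep2 x
    exact ⟨s, f, g, fun _ => q, by rw [TensorProduct.sum_tmul]⟩
  | add x y hx hy =>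
    obtain ⟨s, f, g, p, rfl⟩ := hx
    obtain ⟨s', f', g', p', rfl⟩ := hy
    refine ⟨s ∪ s'.image (· + (s.sup id + 1)),
      fun i => if i < s.sup id + 1 then f i else f' (i - (s.sup id + 1)),
      fun i => if i < s.sup id + 1 then g i else g' (i - (s.sup id + 1)),
      fun i => if i < s.sup id + 1 then p i else p' (i - (s.sup id + 1)), ?_⟩
    rw [sum_shift s s' (fun i => (f i ⊗ₜ[k] g i) ⊗ₜ[k] p i)
      (fun i => (f' i ⊗ₜ[k] g' i) ⊗ₜ[k] p' i)]
    exact Finset.sum_congr rfl fun i _ => by dsimp only; split_ifs <;> rfl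

end Rep

section Core
variable {A V C : Type*} [Ring A] [Algebra k A] [AddCommGroup V] [Module k V]
  [Ring C] [Algebra k C] {e : V} {R1 : V ⊗[k] A →ₗ[k] A ⊗[k] V}
  {R2 : C ⊗[k] V →ₗ[k] V ⊗[k] C} {R3 : C ⊗[k] A →ₗ[k] A ⊗[k] C}
  {E : V ⊗[k] V →ₗ[k] (A ⊗[k] V) ⊗[k] C}

lemma mulAV_tmul (a a' : A) (v : V) :
    mulAV k A V (a ⊗ₜ[k] (a' ⊗ₜ[k] v)) = (a * a') ⊗ₜ[k] v := by
  simp [mulAV]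

lemma mulXC_tmul {X : Type*} [AddCommGroup X] [Module k X] (x : X) (c c' : C) :
    mulXC k X C ((x ⊗ₜ[k] c) ⊗ₜ[k] c') = x ⊗ₜ[k] (c * c') := by
  simp [mulXC]

lemma tsTail_tmul (a a' : A) (v : V) (c c' : C) :
    tsTail k A V C ((a ⊗ₜ[k] ((a' ⊗ₜ[k] v) ⊗ₜ[k] c)) ⊗ₜ[k] c')
      = ((a * a') ⊗ₜ[k] v) ⊗ₜ[k] (c * c') := by
  simp [tsTail, mulAV, mulXC]


def nuTail (R2' : C ⊗[k] V →ₗ[k] V ⊗[k] C) (E' : V ⊗[k] V →ₗ[k] (A ⊗[k] V) ⊗[k] C) :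
    ((A ⊗[k] V) ⊗[k] C) ⊗[k] V →ₗ[k] (A ⊗[k] V) ⊗[k] C :=
  tsTail k A V C ∘ₗ rTensor C (lTensor A E') ∘ₗ rTensor C (α k A V V)
    ∘ₗ α' k (A ⊗[k] V) V C ∘ₗ lTensor (A ⊗[k] V) R2' ∘ₗ α k (A ⊗[k] V) C V

lemma pt_nuTail (b : A) (wv : V) (c : C) (u : V)
    {s : Finset ℕ} {u1 : ℕ → V} {d1 : ℕ → C}
    (h1 : R2 (c ⊗ₜ[k] u) = ∑ i ∈ s, u1 i ⊗ₜ[k] d1 i)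
    {s' : ℕ → Finset ℕ} {x : ℕ → ℕ → A} {y : ℕ → ℕ → V} {z : ℕ → ℕ → C}
    (h2 : ∀ i, E (wv ⊗ₜ[k] u1 i) = ∑ j ∈ s' i, (x i j ⊗ₜ[k] y i j) ⊗ₜ[k] z i j) :
    nuTail R2 E (((b ⊗ₜ[k] wv) ⊗ₜ[k] c) ⊗ₜ[k] u)
      = ∑ i ∈ s, ∑ j ∈ s' i, ((b * x i j) ⊗ₜ[k] y i j) ⊗ₜ[k] (z i j * d1 i) := by
  simp only [nuTail, tsTail, mulAV, mulXC, LinearMap.coe_comp, Function.comp_apply,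
    LinearEquiv.coe_coe, TensorProduct.assoc_tmul, TensorProduct.assoc_symm_tmul,
    LinearMap.lTensor_tmul, LinearMap.rTensor_tmul, LinearMap.mul'_apply, h1, h2, map_sum,
    TensorProduct.sum_tmul, TensorProduct.tmul_sum]

lemma pt_tsP (c : C) (b : A) (u : V)
    {s : Finset ℕ} {p : ℕ → A} {q : ℕ → C}
    (h1 : R3 (c ⊗ₜ[k] b) = ∑ i ∈ s, p i ⊗ₜ[k] q i)
    {s' : ℕ → Finset ℕ} {u' : ℕ → ℕ → V} {d' : ℕ → ℕ → C}
    (h2 : ∀ i, R2 (q i ⊗ₜ[k] u) = ∑ j ∈ s' i, u' i j ⊗ₜ[k] d' i j) :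
    tsP k A V C R2 R3 (c ⊗ₜ[k] (b ⊗ₜ[k] u))
      = ∑ i ∈ s, ∑ j ∈ s' i, (p i ⊗ₜ[k] u' i j) ⊗ₜ[k] d' i j := by
  simp only [tsP, LinearMap.coe_comp, Function.comp_apply, LinearEquiv.coe_coe,
    TensorProduct.assoc_tmul, TensorProduct.assoc_symm_tmul, LinearMap.lTensor_tmul,
    LinearMap.rTensor_tmul, h1, h2, map_sum, TensorProduct.sum_tmul, TensorProduct.tmul_sum]

lemma pt_tsNu (b : A) (wv : V) (b' : A) (u : V)
    {s : Finset ℕ} {p : ℕ → A} {w : ℕ → V}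
    (h1 : R1 (wv ⊗ₜ[k] b') = ∑ i ∈ s, p i ⊗ₜ[k] w i)
    {s' : ℕ → Finset ℕ} {x : ℕ → ℕ → A} {y : ℕ → ℕ → V} {z : ℕ → ℕ → C}
    (h2 : ∀ i, E (w i ⊗ₜ[k] u) = ∑ j ∈ s' i, (x i j ⊗ₜ[k] y i j) ⊗ₜ[k] z i j) :
    tsNu k A V C R1 E ((b ⊗ₜ[k] wv) ⊗ₜ[k] (b' ⊗ₜ[k] u))
      = ∑ i ∈ s, ∑ j ∈ s' i, ((b * (p i * x i j)) ⊗ₜ[k] y i j) ⊗ₜ[k] z i j := by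
  simp only [tsNu, mulAV, LinearMap.coe_comp, Function.comp_apply, LinearEquiv.coe_coe,
    TensorProduct.assoc_tmul, TensorProduct.assoc_symm_tmul, LinearMap.lTensor_tmul,
    LinearMap.rTensor_tmul, LinearMap.mul'_apply, h1, h2, map_sum,
    TensorProduct.sum_tmul, TensorProduct.tmul_sum]

lemma pt_tsNu3 (b : A) (wv : V) (b' b'' : A) (u : V)
    {s : Finset ℕ} {s' : ℕ → Finset ℕ} {s'' : ℕ → ℕ → Finset ℕ}
    {p : ℕ → ℕ → ℕ → A} {w : ℕ → ℕ → ℕ → V}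
    (h1 : R1 (wv ⊗ₜ[k] (b' * b''))
      = ∑ i ∈ s, ∑ j ∈ s' i, ∑ t ∈ s'' i j, p i j t ⊗ₜ[k] w i j t)
    {sE' : ℕ → ℕ → ℕ → Finset ℕ} {x : ℕ → ℕ → ℕ → ℕ → A} {y : ℕ → ℕ → ℕ → ℕ → V}
    {z : ℕ → ℕ → ℕ → ℕ → C}
    (h2 : ∀ i j t, E (w i j t ⊗ₜ[k] u)
      = ∑ o ∈ sE' i j t, (x i j t o ⊗ₜ[k] y i j t o) ⊗ₜ[k] z i j t o) :
    tsNu k A V C R1 E ((b ⊗ₜ[k] wv) ⊗ₜ[k] ((b' * b'') ⊗ₜ[k] u))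
      = ∑ i ∈ s, ∑ j ∈ s' i, ∑ t ∈ s'' i j, ∑ o ∈ sE' i j t,
          ((b * (p i j t * x i j t o)) ⊗ₜ[k] y i j t o) ⊗ₜ[k] z i j t o := by
  simp only [tsNu, mulAV, LinearMap.coe_comp, Function.comp_apply, LinearEquiv.coe_coe,
    TensorProduct.assoc_tmul, TensorProduct.assoc_symm_tmul, LinearMap.lTensor_tmul,
    LinearMap.rTensor_tmul, LinearMap.mul'_apply, h1, h2, map_sum,
    TensorProduct.sum_tmul, TensorProduct.tmul_sum]

lemma pt_tsP3 (c : C) (b b' : A) (u : V)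
    {s : Finset ℕ} {s' : ℕ → Finset ℕ} {s'' : ℕ → ℕ → Finset ℕ}
    {p : ℕ → ℕ → ℕ → A} {q : ℕ → ℕ → ℕ → C}
    (h1 : R3 (c ⊗ₜ[k] (b * b'))
      = ∑ i ∈ s, ∑ j ∈ s' i, ∑ t ∈ s'' i j, p i j t ⊗ₜ[k] q i j t)
    {sR : ℕ → ℕ → ℕ → Finset ℕ} {u' : ℕ → ℕ → ℕ → ℕ → V} {d' : ℕ → ℕ → ℕ → ℕ → C}
    (h2 : ∀ i j t, R2 (q i j t ⊗ₜ[k] u)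
      = ∑ o ∈ sR i j t, u' i j t o ⊗ₜ[k] d' i j t o) :
    tsP k A V C R2 R3 (c ⊗ₜ[k] ((b * b') ⊗ₜ[k] u))
      = ∑ i ∈ s, ∑ j ∈ s' i, ∑ t ∈ s'' i j, ∑ o ∈ sR i j t,
          (p i j t ⊗ₜ[k] u' i j t o) ⊗ₜ[k] d' i j t o := by
  simp only [tsP, LinearMap.coe_comp, Function.comp_apply, LinearEquiv.coe_coe,
    TensorProduct.assoc_tmul, TensorProduct.assoc_symm_tmul, LinearMap.lTensor_tmul,
    LinearMap.rTensor_tmul, h1, h2, map_sum, TensorProduct.sum_tmul, TensorProduct.tmul_sum]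

variable (h : IsTwoSidedData k A V C e R1 R2 R3 E)
include h

lemma pt_r3_mul_right (c c' : C) (a : A)
    {s : Finset ℕ} {p : ℕ → A} {q : ℕ → C}
    (h1 : R3 (c' ⊗ₜ[k] a) = ∑ i ∈ s, p i ⊗ₜ[k] q i)
    {s' : ℕ → Finset ℕ} {p' : ℕ → ℕ → A} {q' : ℕ → ℕ → C}
    (h2 : ∀ i, R3 (c ⊗ₜ[k] p i) = ∑ j ∈ s' i, p' i j ⊗ₜ[k] q' i j) :
    R3 ((c * c') ⊗ₜ[k] a) = ∑ i ∈ s, ∑ j ∈ s' i, p' i j ⊗ₜ[k] (q' i j * q i) := by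
  have H := LinearMap.congr_fun h.twist.mul_right ((c ⊗ₜ[k] c') ⊗ₜ[k] a)
  simp only [LinearMap.coe_comp, Function.comp_apply, LinearEquiv.coe_coe,
    TensorProduct.assoc_tmul, TensorProduct.assoc_symm_tmul, LinearMap.lTensor_tmul,
    LinearMap.rTensor_tmul, LinearMap.mul'_apply, h1, h2, map_sum,
    TensorProduct.sum_tmul, TensorProduct.tmul_sum] at H
  exact H

lemma pt_r3_mul_left (c : C) (a a' : A)
    {s : Finset ℕ} {p : ℕ → A} {q : ℕ → C}
    (h1 : R3 (c ⊗ₜ[k] a) = ∑ i ∈ s, p i ⊗ₜ[k] q i)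
    {s' : ℕ → Finset ℕ} {p' : ℕ → ℕ → A} {q' : ℕ → ℕ → C}
    (h2 : ∀ i, R3 (q i ⊗ₜ[k] a') = ∑ j ∈ s' i, p' i j ⊗ₜ[k] q' i j) :
    R3 (c ⊗ₜ[k] (a * a')) = ∑ i ∈ s, ∑ j ∈ s' i, (p i * p' i j) ⊗ₜ[k] q' i j := by
  have H := LinearMap.congr_fun h.twist.mul_left ((c ⊗ₜ[k] a) ⊗ₜ[k] a')
  simp only [LinearMap.coe_comp, Function.comp_apply, LinearEquiv.coe_coe,
    TensorProduct.assoc_tmul, TensorProduct.assoc_symm_tmul, LinearMap.lTensor_tmul,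
    LinearMap.rTensor_tmul, LinearMap.mul'_apply, h1, h2, map_sum,
    TensorProduct.sum_tmul, TensorProduct.tmul_sum] at H
  exact H

lemma pt_r1_mul (v : V) (a a' : A)
    {s : Finset ℕ} {p : ℕ → A} {w : ℕ → V}
    (h1 : R1 (v ⊗ₜ[k] a) = ∑ i ∈ s, p i ⊗ₜ[k] w i)
    {s' : ℕ → Finset ℕ} {p' : ℕ → ℕ → A} {w' : ℕ → ℕ → V}
    (h2 : ∀ i, R1 (w i ⊗ₜ[k] a') = ∑ j ∈ s' i, p' i j ⊗ₜ[k] w' i j) :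
    R1 (v ⊗ₜ[k] (a * a')) = ∑ i ∈ s, ∑ j ∈ s' i, (p i * p' i j) ⊗ₜ[k] w' i j := by
  have H := LinearMap.congr_fun h.eq1 ((v ⊗ₜ[k] a) ⊗ₜ[k] a')
  simp only [LinearMap.coe_comp, Function.comp_apply, LinearEquiv.coe_coe,
    TensorProduct.assoc_tmul, TensorProduct.assoc_symm_tmul, LinearMap.lTensor_tmul,
    LinearMap.rTensor_tmul, LinearMap.mul'_apply, h1, h2, map_sum,
    TensorProduct.sum_tmul, TensorProduct.tmul_sum] at H
  exact H

lemma pt_r1_mul3 (v : V) (a b c : A)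
    {s : Finset ℕ} {p : ℕ → A} {w : ℕ → V}
    (h1 : R1 (v ⊗ₜ[k] a) = ∑ i ∈ s, p i ⊗ₜ[k] w i)
    {s' : ℕ → Finset ℕ} {s'' : ℕ → ℕ → Finset ℕ} {p' : ℕ → ℕ → ℕ → A} {w' : ℕ → ℕ → ℕ → V}
    (h2 : ∀ i, R1 (w i ⊗ₜ[k] (b * c))
      = ∑ j ∈ s' i, ∑ t ∈ s'' i j, p' i j t ⊗ₜ[k] w' i j t) :
    R1 (v ⊗ₜ[k] (a * (b * c)))
      = ∑ i ∈ s, ∑ j ∈ s' i, ∑ t ∈ s'' i j, (p i * p' i j t) ⊗ₜ[k] w' i j t := by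
  have H := LinearMap.congr_fun h.eq1 ((v ⊗ₜ[k] a) ⊗ₜ[k] (b * c))
  simp only [LinearMap.coe_comp, Function.comp_apply, LinearEquiv.coe_coe,
    TensorProduct.assoc_tmul, TensorProduct.assoc_symm_tmul, LinearMap.lTensor_tmul,
    LinearMap.rTensor_tmul, LinearMap.mul'_apply, h1, h2, map_sum,
    TensorProduct.sum_tmul, TensorProduct.tmul_sum] at H
  exact H

lemma pt_r3_mul_left3 (c : C) (a b b' : A)
    {s : Finset ℕ} {p : ℕ → A} {q : ℕ → C}
    (h1 : R3 (c ⊗ₜ[k] a) = ∑ i ∈ s, p i ⊗ₜ[k] q i)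
    {s' : ℕ → Finset ℕ} {s'' : ℕ → ℕ → Finset ℕ} {p' : ℕ → ℕ → ℕ → A} {q' : ℕ → ℕ → ℕ → C}
    (h2 : ∀ i, R3 (q i ⊗ₜ[k] (b * b'))
      = ∑ j ∈ s' i, ∑ t ∈ s'' i j, p' i j t ⊗ₜ[k] q' i j t) :
    R3 (c ⊗ₜ[k] (a * (b * b')))
      = ∑ i ∈ s, ∑ j ∈ s' i, ∑ t ∈ s'' i j, (p i * p' i j t) ⊗ₜ[k] q' i j t := by
  have H := LinearMap.congr_fun h.twist.mul_left ((c ⊗ₜ[k] a) ⊗ₜ[k] (b * b'))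
  simp only [LinearMap.coe_comp, Function.comp_apply, LinearEquiv.coe_coe,
    TensorProduct.assoc_tmul, TensorProduct.assoc_symm_tmul, LinearMap.lTensor_tmul,
    LinearMap.rTensor_tmul, LinearMap.mul'_apply, h1, h2, map_sum,
    TensorProduct.sum_tmul, TensorProduct.tmul_sum] at H
  exact H

lemma pt_r2_mul (c c' : C) (v : V)
    {s : Finset ℕ} {u : ℕ → V} {d : ℕ → C}
    (h1 : R2 (c' ⊗ₜ[k] v) = ∑ i ∈ s, u i ⊗ₜ[k] d i)
    {s' : ℕ → Finset ℕ} {u' : ℕ → ℕ → V} {d' : ℕ → ℕ → C}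
    (h2 : ∀ i, R2 (c ⊗ₜ[k] u i) = ∑ j ∈ s' i, u' i j ⊗ₜ[k] d' i j) :
    R2 ((c * c') ⊗ₜ[k] v) = ∑ i ∈ s, ∑ j ∈ s' i, u' i j ⊗ₜ[k] (d' i j * d i) := by
  have H := LinearMap.congr_fun h.eq2 ((c ⊗ₜ[k] c') ⊗ₜ[k] v)
  simp only [LinearMap.coe_comp, Function.comp_apply, LinearEquiv.coe_coe,
    TensorProduct.assoc_tmul, TensorProduct.assoc_symm_tmul, LinearMap.lTensor_tmul,
    LinearMap.rTensor_tmul, LinearMap.mul'_apply, h1, h2, map_sum,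
    TensorProduct.sum_tmul, TensorProduct.tmul_sum] at H
  exact H

lemma pt_eq3 (c : C) (v : V) (a : A)
    {s1 : Finset ℕ} {p : ℕ → A} {w : ℕ → V}
    (h1 : R1 (v ⊗ₜ[k] a) = ∑ i ∈ s1, p i ⊗ₜ[k] w i)
    {s2 : ℕ → Finset ℕ} {p' : ℕ → ℕ → A} {q' : ℕ → ℕ → C}
    (h2 : ∀ i, R3 (c ⊗ₜ[k] p i) = ∑ j ∈ s2 i, p' i j ⊗ₜ[k] q' i j)
    {s3 : ℕ → ℕ → Finset ℕ} {u : ℕ → ℕ → ℕ → V} {d : ℕ → ℕ → ℕ → C}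
    (h3 : ∀ i j, R2 (q' i j ⊗ₜ[k] w i) = ∑ l ∈ s3 i j, u i j l ⊗ₜ[k] d i j l)
    {t1 : Finset ℕ} {ub : ℕ → V} {db : ℕ → C}
    (h4 : R2 (c ⊗ₜ[k] v) = ∑ m ∈ t1, ub m ⊗ₜ[k] db m)
    {t2 : ℕ → Finset ℕ} {pb : ℕ → ℕ → A} {qb : ℕ → ℕ → C}
    (h5 : ∀ m, R3 (db m ⊗ₜ[k] a) = ∑ n ∈ t2 m, pb m n ⊗ₜ[k] qb m n)
    {t3 : ℕ → ℕ → Finset ℕ} {pt : ℕ → ℕ → ℕ → A} {wt : ℕ → ℕ → ℕ → V}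
    (h6 : ∀ m n, R1 (ub m ⊗ₜ[k] pb m n) = ∑ o ∈ t3 m n, pt m n o ⊗ₜ[k] wt m n o) :
    ∑ i ∈ s1, ∑ j ∈ s2 i, ∑ l ∈ s3 i j, p' i j ⊗ₜ[k] (u i j l ⊗ₜ[k] d i j l)
      = ∑ m ∈ t1, ∑ n ∈ t2 m, ∑ o ∈ t3 m n, pt m n o ⊗ₜ[k] (wt m n o ⊗ₜ[k] qb m n) := by
  have H := LinearMap.congr_fun h.eq3 (c ⊗ₜ[k] (v ⊗ₜ[k] a))
  simp only [LinearMap.coe_comp, Function.comp_apply, LinearEquiv.coe_coe,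
    TensorProduct.assoc_tmul, TensorProduct.assoc_symm_tmul, LinearMap.lTensor_tmul,
    LinearMap.rTensor_tmul, LinearMap.mul'_apply, h1, h2, h3, h4, h5, h6, map_sum,
    TensorProduct.sum_tmul, TensorProduct.tmul_sum] at H
  exact H

lemma pt_eq4 (u u' : V) (a : A)
    {s1 : Finset ℕ} {p : ℕ → A} {w : ℕ → V}
    (h1 : R1 (u' ⊗ₜ[k] a) = ∑ i ∈ s1, p i ⊗ₜ[k] w i)
    {s2 : ℕ → Finset ℕ} {p' : ℕ → ℕ → A} {w' : ℕ → ℕ → V}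
    (h2 : ∀ i, R1 (u ⊗ₜ[k] p i) = ∑ j ∈ s2 i, p' i j ⊗ₜ[k] w' i j)
    {s3 : ℕ → ℕ → Finset ℕ} {x : ℕ → ℕ → ℕ → A} {y : ℕ → ℕ → ℕ → V} {z : ℕ → ℕ → ℕ → C}
    (h3 : ∀ i j, E (w' i j ⊗ₜ[k] w i) = ∑ l ∈ s3 i j, (x i j l ⊗ₜ[k] y i j l) ⊗ₜ[k] z i j l)
    {t1 : Finset ℕ} {xb : ℕ → A} {yb : ℕ → V} {zb : ℕ → C}
    (h4 : E (u ⊗ₜ[k] u') = ∑ m ∈ t1, (xb m ⊗ₜ[k] yb m) ⊗ₜ[k] zb m)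
    {t2 : ℕ → Finset ℕ} {ab : ℕ → ℕ → A} {cb : ℕ → ℕ → C}
    (h5 : ∀ m, R3 (zb m ⊗ₜ[k] a) = ∑ n ∈ t2 m, ab m n ⊗ₜ[k] cb m n)
    {t3 : ℕ → ℕ → Finset ℕ} {at' : ℕ → ℕ → ℕ → A} {yt : ℕ → ℕ → ℕ → V}
    (h6 : ∀ m n, R1 (yb m ⊗ₜ[k] ab m n) = ∑ o ∈ t3 m n, at' m n o ⊗ₜ[k] yt m n o) :
    ∑ i ∈ s1, ∑ j ∈ s2 i, ∑ l ∈ s3 i j,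
        ((p' i j * x i j l) ⊗ₜ[k] y i j l) ⊗ₜ[k] z i j l
      = ∑ m ∈ t1, ∑ n ∈ t2 m, ∑ o ∈ t3 m n,
          ((xb m * at' m n o) ⊗ₜ[k] yt m n o) ⊗ₜ[k] cb m n := by
  have H := LinearMap.congr_fun h.eq4 ((u ⊗ₜ[k] u') ⊗ₜ[k] a)
  simp only [mulAV, LinearMap.coe_comp, Function.comp_apply, LinearEquiv.coe_coe,
    TensorProduct.assoc_tmul, TensorProduct.assoc_symm_tmul, LinearMap.lTensor_tmul,
    LinearMap.rTensor_tmul, LinearMap.mul'_apply, h1, h2, h3, h4, h5, h6, map_sum,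
    TensorProduct.sum_tmul, TensorProduct.tmul_sum] at H
  exact H

lemma pt_eq5 (c : C) (u u' : V)
    {s1 : Finset ℕ} {u1 : ℕ → V} {d1 : ℕ → C}
    (h1 : R2 (c ⊗ₜ[k] u) = ∑ i ∈ s1, u1 i ⊗ₜ[k] d1 i)
    {s2 : ℕ → Finset ℕ} {u2 : ℕ → ℕ → V} {d2 : ℕ → ℕ → C}
    (h2 : ∀ i, R2 (d1 i ⊗ₜ[k] u') = ∑ j ∈ s2 i, u2 i j ⊗ₜ[k] d2 i j)
    {s3 : ℕ → ℕ → Finset ℕ} {x : ℕ → ℕ → ℕ → A} {y : ℕ → ℕ → ℕ → V} {z : ℕ → ℕ → ℕ → C}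
    (h3 : ∀ i j, E (u1 i ⊗ₜ[k] u2 i j) = ∑ l ∈ s3 i j, (x i j l ⊗ₜ[k] y i j l) ⊗ₜ[k] z i j l)
    {t1 : Finset ℕ} {xb : ℕ → A} {yb : ℕ → V} {zb : ℕ → C}
    (h4 : E (u ⊗ₜ[k] u') = ∑ m ∈ t1, (xb m ⊗ₜ[k] yb m) ⊗ₜ[k] zb m)
    {t2 : ℕ → Finset ℕ} {pb : ℕ → ℕ → A} {qb : ℕ → ℕ → C}
    (h5 : ∀ m, R3 (c ⊗ₜ[k] xb m) = ∑ n ∈ t2 m, pb m n ⊗ₜ[k] qb m n)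
    {t3 : ℕ → ℕ → Finset ℕ} {yt : ℕ → ℕ → ℕ → V} {dt : ℕ → ℕ → ℕ → C}
    (h6 : ∀ m n, R2 (qb m n ⊗ₜ[k] yb m) = ∑ o ∈ t3 m n, yt m n o ⊗ₜ[k] dt m n o) :
    ∑ i ∈ s1, ∑ j ∈ s2 i, ∑ l ∈ s3 i j,
        (x i j l ⊗ₜ[k] y i j l) ⊗ₜ[k] (z i j l * d2 i j)
      = ∑ m ∈ t1, ∑ n ∈ t2 m, ∑ o ∈ t3 m n,
          (pb m n ⊗ₜ[k] yt m n o) ⊗ₜ[k] (dt m n o * zb m) := by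
  have H := LinearMap.congr_fun h.eq5 ((c ⊗ₜ[k] u) ⊗ₜ[k] u')
  simp only [mulXC, LinearMap.coe_comp, Function.comp_apply, LinearEquiv.coe_coe,
    TensorProduct.assoc_tmul, TensorProduct.assoc_symm_tmul, LinearMap.lTensor_tmul,
    LinearMap.rTensor_tmul, LinearMap.mul'_apply, h1, h2, h3, h4, h5, h6, map_sum,
    TensorProduct.sum_tmul, TensorProduct.tmul_sum] at H
  exact H

lemma pt_eq6 (u u' u'' : V)
    {s1 : Finset ℕ} {x1 : ℕ → A} {y1 : ℕ → V} {z1 : ℕ → C}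
    (h1 : E (u' ⊗ₜ[k] u'') = ∑ i ∈ s1, (x1 i ⊗ₜ[k] y1 i) ⊗ₜ[k] z1 i)
    {s2 : ℕ → Finset ℕ} {p : ℕ → ℕ → A} {w : ℕ → ℕ → V}
    (h2 : ∀ i, R1 (u ⊗ₜ[k] x1 i) = ∑ j ∈ s2 i, p i j ⊗ₜ[k] w i j)
    {s3 : ℕ → ℕ → Finset ℕ} {x2 : ℕ → ℕ → ℕ → A} {y2 : ℕ → ℕ → ℕ → V} {z2 : ℕ → ℕ → ℕ → C}
    (h3 : ∀ i j, E (w i j ⊗ₜ[k] y1 i) = ∑ l ∈ s3 i j, (x2 i j l ⊗ₜ[k] y2 i j l) ⊗ₜ[k] z2 i j l)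
    {t1 : Finset ℕ} {xb : ℕ → A} {yb : ℕ → V} {zb : ℕ → C}
    (h4 : E (u ⊗ₜ[k] u') = ∑ m ∈ t1, (xb m ⊗ₜ[k] yb m) ⊗ₜ[k] zb m)
    {t2 : ℕ → Finset ℕ} {vb : ℕ → ℕ → V} {db : ℕ → ℕ → C}
    (h5 : ∀ m, R2 (zb m ⊗ₜ[k] u'') = ∑ n ∈ t2 m, vb m n ⊗ₜ[k] db m n)
    {t3 : ℕ → ℕ → Finset ℕ} {xt : ℕ → ℕ → ℕ → A} {yt : ℕ → ℕ → ℕ → V} {zt : ℕ → ℕ → ℕ → C}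
    (h6 : ∀ m n, E (yb m ⊗ₜ[k] vb m n) = ∑ o ∈ t3 m n, (xt m n o ⊗ₜ[k] yt m n o) ⊗ₜ[k] zt m n o) :
    ∑ i ∈ s1, ∑ j ∈ s2 i, ∑ l ∈ s3 i j,
        ((p i j * x2 i j l) ⊗ₜ[k] y2 i j l) ⊗ₜ[k] (z2 i j l * z1 i)
      = ∑ m ∈ t1, ∑ n ∈ t2 m, ∑ o ∈ t3 m n,
          ((xb m * xt m n o) ⊗ₜ[k] yt m n o) ⊗ₜ[k] (zt m n o * db m n) := by
  have H := LinearMap.congr_fun h.eq6 ((u ⊗ₜ[k] u') ⊗ₜ[k] u'')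
  simp only [tsTail, mulAV, mulXC, LinearMap.coe_comp, Function.comp_apply, LinearEquiv.coe_coe,
    TensorProduct.assoc_tmul, TensorProduct.assoc_symm_tmul, LinearMap.lTensor_tmul,
    LinearMap.rTensor_tmul, LinearMap.mul'_apply, h1, h2, h3, h4, h5, h6, map_sum,
    TensorProduct.sum_tmul, TensorProduct.tmul_sum] at H
  exact H

lemma mir2_core (c c' : C) (a : A) (v : V) :
    (tsP k A V C R2 R3 ∘ₗ rTensor (A ⊗[k] V) (mul' k C)) ((c ⊗ₜ[k] c') ⊗ₜ[k] (a ⊗ₜ[k] v))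
      = (lTensor (A ⊗[k] V) (mul' k C) ∘ₗ α k (A ⊗[k] V) C C
          ∘ₗ rTensor C (tsP k A V C R2 R3) ∘ₗ α' k C (A ⊗[k] V) C
          ∘ₗ lTensor C (tsP k A V C R2 R3) ∘ₗ α k C C (A ⊗[k] V))
          ((c ⊗ₜ[k] c') ⊗ₜ[k] (a ⊗ₜ[k] v)) := by
  choose s3 f3 g3 hR3 using fun (c₀ : C) (b : A) => rep2 (k := k) (R3 (c₀ ⊗ₜ[k] b))
  choose s2 f2 g2 hR2 using fun (c₀ : C) (x : V) => rep2 (k := k) (R2 (c₀ ⊗ₜ[k] x))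
  have etsP : ∀ (c₀ : C) (b : A) (u : V),
      tsP k A V C R2 R3 (c₀ ⊗ₜ[k] (b ⊗ₜ[k] u))
        = ∑ i ∈ s3 c₀ b, ∑ j ∈ s2 (g3 c₀ b i) u,
            (f3 c₀ b i ⊗ₜ[k] f2 (g3 c₀ b i) u j) ⊗ₜ[k] g2 (g3 c₀ b i) u j :=
    fun c₀ b u => pt_tsP c₀ b u (hR3 c₀ b) (fun i => hR2 (g3 c₀ b i) u)
  have hmulr := pt_r3_mul_right h c c' a (hR3 c' a) (fun i => hR3 c (f3 c' a i))
  have hmul2 : ∀ i j, R2 ((g3 c (f3 c' a i) j * g3 c' a i) ⊗ₜ[k] v)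
      = ∑ m ∈ s2 (g3 c' a i) v, ∑ n ∈ s2 (g3 c (f3 c' a i) j) (f2 (g3 c' a i) v m),
          f2 (g3 c (f3 c' a i) j) (f2 (g3 c' a i) v m) n
            ⊗ₜ[k] (g2 (g3 c (f3 c' a i) j) (f2 (g3 c' a i) v m) n * g2 (g3 c' a i) v m) :=
    fun i j => pt_r2_mul h _ _ v (hR2 (g3 c' a i) v)
      (fun m => hR2 (g3 c (f3 c' a i) j) (f2 (g3 c' a i) v m))
  have L : (tsP k A V C R2 R3 ∘ₗ rTensor (A ⊗[k] V) (mul' k C))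
        ((c ⊗ₜ[k] c') ⊗ₜ[k] (a ⊗ₜ[k] v))
      = ∑ i ∈ s3 c' a, ∑ j ∈ s3 c (f3 c' a i), ∑ m ∈ s2 (g3 c' a i) v,
          ∑ n ∈ s2 (g3 c (f3 c' a i) j) (f2 (g3 c' a i) v m),
          (f3 c (f3 c' a i) j ⊗ₜ[k] f2 (g3 c (f3 c' a i) j) (f2 (g3 c' a i) v m) n)
            ⊗ₜ[k] (g2 (g3 c (f3 c' a i) j) (f2 (g3 c' a i) v m) n * g2 (g3 c' a i) v m) := by
    simp only [tsP, LinearMap.coe_comp, Function.comp_apply, LinearEquiv.coe_coe,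
      TensorProduct.assoc_tmul, TensorProduct.assoc_symm_tmul, LinearMap.lTensor_tmul,
      LinearMap.rTensor_tmul, LinearMap.mul'_apply, hmulr, hmul2, map_sum,
      TensorProduct.sum_tmul, TensorProduct.tmul_sum]
  rw [L]
  have R : (lTensor (A ⊗[k] V) (mul' k C) ∘ₗ α k (A ⊗[k] V) C C
          ∘ₗ rTensor C (tsP k A V C R2 R3) ∘ₗ α' k C (A ⊗[k] V) C
          ∘ₗ lTensor C (tsP k A V C R2 R3) ∘ₗ α k C C (A ⊗[k] V))
          ((c ⊗ₜ[k] c') ⊗ₜ[k] (a ⊗ₜ[k] v))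
      = ∑ i ∈ s3 c' a, ∑ m ∈ s2 (g3 c' a i) v, ∑ j ∈ s3 c (f3 c' a i),
          ∑ n ∈ s2 (g3 c (f3 c' a i) j) (f2 (g3 c' a i) v m),
          (f3 c (f3 c' a i) j ⊗ₜ[k] f2 (g3 c (f3 c' a i) j) (f2 (g3 c' a i) v m) n)
            ⊗ₜ[k] (g2 (g3 c (f3 c' a i) j) (f2 (g3 c' a i) v m) n * g2 (g3 c' a i) v m) := by
    simp only [LinearMap.coe_comp, Function.comp_apply, LinearEquiv.coe_coe,
      TensorProduct.assoc_tmul, TensorProduct.assoc_symm_tmul, LinearMap.lTensor_tmul,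
      LinearMap.rTensor_tmul, LinearMap.mul'_apply, etsP, map_sum,
      TensorProduct.sum_tmul, TensorProduct.tmul_sum]
  rw [R]
  exact Finset.sum_congr rfl fun i _ => Finset.sum_comm

lemma mir3_core (a a' a'' : A) (v v' v'' : V) :
    (lTensor (A ⊗[k] V) (mul' k C) ∘ₗ α k (A ⊗[k] V) C C
        ∘ₗ rTensor C (tsNu k A V C R1 E) ∘ₗ α' k (A ⊗[k] V) (A ⊗[k] V) C
        ∘ₗ lTensor (A ⊗[k] V) (tsP k A V C R2 R3) ∘ₗ α k (A ⊗[k] V) C (A ⊗[k] V)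
        ∘ₗ rTensor (A ⊗[k] V) (tsNu k A V C R1 E))
        (((a ⊗ₜ[k] v) ⊗ₜ[k] (a' ⊗ₜ[k] v')) ⊗ₜ[k] (a'' ⊗ₜ[k] v''))
      = (lTensor (A ⊗[k] V) (mul' k C) ∘ₗ α k (A ⊗[k] V) C C
        ∘ₗ rTensor C (tsNu k A V C R1 E) ∘ₗ α' k (A ⊗[k] V) (A ⊗[k] V) C
        ∘ₗ lTensor (A ⊗[k] V) (tsNu k A V C R1 E)
        ∘ₗ α k (A ⊗[k] V) (A ⊗[k] V) (A ⊗[k] V))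
        (((a ⊗ₜ[k] v) ⊗ₜ[k] (a' ⊗ₜ[k] v')) ⊗ₜ[k] (a'' ⊗ₜ[k] v'')) := by
  choose s1 f1 g1 hR1 using fun (x : V) (b : A) => rep2 (k := k) (R1 (x ⊗ₜ[k] b))
  choose s2 f2 g2 hR2 using fun (c₀ : C) (x : V) => rep2 (k := k) (R2 (c₀ ⊗ₜ[k] x))
  choose s3 f3 g3 hR3 using fun (c₀ : C) (b : A) => rep2 (k := k) (R3 (c₀ ⊗ₜ[k] b))
  choose sE eA eV eC hE using fun (x y : V) => rep3 (k := k) (E (x ⊗ₜ[k] y))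
  have eNu : ∀ (b : A) (wv : V) (b' : A) (u : V),
      tsNu k A V C R1 E ((b ⊗ₜ[k] wv) ⊗ₜ[k] (b' ⊗ₜ[k] u))
        = ∑ i ∈ s1 wv b', ∑ j ∈ sE (g1 wv b' i) u,
            ((b * (f1 wv b' i * eA (g1 wv b' i) u j)) ⊗ₜ[k] eV (g1 wv b' i) u j)
              ⊗ₜ[k] eC (g1 wv b' i) u j :=
    fun b wv b' u => pt_tsNu b wv b' u (hR1 wv b') (fun i => hE (g1 wv b' i) u)
  have eP : ∀ (c₀ : C) (b : A) (u : V),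
      tsP k A V C R2 R3 (c₀ ⊗ₜ[k] (b ⊗ₜ[k] u))
        = ∑ i ∈ s3 c₀ b, ∑ j ∈ s2 (g3 c₀ b i) u,
            (f3 c₀ b i ⊗ₜ[k] f2 (g3 c₀ b i) u j) ⊗ₜ[k] g2 (g3 c₀ b i) u j :=
    fun c₀ b u => pt_tsP c₀ b u (hR3 c₀ b) (fun i => hR2 (g3 c₀ b i) u)
  have eT : ∀ (b : A) (wv : V) (c₀ : C) (u : V),
      nuTail R2 E (((b ⊗ₜ[k] wv) ⊗ₜ[k] c₀) ⊗ₜ[k] u)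
        = ∑ i ∈ s2 c₀ u, ∑ j ∈ sE wv (f2 c₀ u i),
            ((b * eA wv (f2 c₀ u i) j) ⊗ₜ[k] eV wv (f2 c₀ u i) j)
              ⊗ₜ[k] (eC wv (f2 c₀ u i) j * g2 c₀ u i) :=
    fun b wv c₀ u => pt_nuTail b wv c₀ u (hR2 c₀ u) (fun i => hE wv (f2 c₀ u i))
  have eNuIn := eNu a' v' a'' v''
  have hmul3 : ∀ m l, R1 (v ⊗ₜ[k] (a' * (f1 v' a'' m * eA (g1 v' a'' m) v'' l)))
      = ∑ i ∈ s1 v a', ∑ j' ∈ s1 (g1 v a' i) (f1 v' a'' m),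
          ∑ t ∈ s1 (g1 (g1 v a' i) (f1 v' a'' m) j') (eA (g1 v' a'' m) v'' l),
          (f1 v a' i * (f1 (g1 v a' i) (f1 v' a'' m) j'
              * f1 (g1 (g1 v a' i) (f1 v' a'' m) j') (eA (g1 v' a'' m) v'' l) t))
            ⊗ₜ[k] g1 (g1 (g1 v a' i) (f1 v' a'' m) j') (eA (g1 v' a'' m) v'' l) t :=
    fun m l => pt_r1_mul3 h v a' _ _ (hR1 v a')
      (fun i => pt_r1_mul h _ _ _ (hR1 (g1 v a' i) (f1 v' a'' m))
        (fun j' => hR1 (g1 (g1 v a' i) (f1 v' a'' m) j') (eA (g1 v' a'' m) v'' l)))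
  have eNuOuter : ∀ m l, tsNu k A V C R1 E ((a ⊗ₜ[k] v)
        ⊗ₜ[k] ((a' * (f1 v' a'' m * eA (g1 v' a'' m) v'' l)) ⊗ₜ[k] eV (g1 v' a'' m) v'' l))
      = ∑ i ∈ s1 v a', ∑ j' ∈ s1 (g1 v a' i) (f1 v' a'' m),
          ∑ t ∈ s1 (g1 (g1 v a' i) (f1 v' a'' m) j') (eA (g1 v' a'' m) v'' l),
          ∑ o ∈ sE (g1 (g1 (g1 v a' i) (f1 v' a'' m) j') (eA (g1 v' a'' m) v'' l) t)
            (eV (g1 v' a'' m) v'' l),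
          ((a * ((f1 v a' i * (f1 (g1 v a' i) (f1 v' a'' m) j'
              * f1 (g1 (g1 v a' i) (f1 v' a'' m) j') (eA (g1 v' a'' m) v'' l) t))
            * eA (g1 (g1 (g1 v a' i) (f1 v' a'' m) j') (eA (g1 v' a'' m) v'' l) t)
                (eV (g1 v' a'' m) v'' l) o))
            ⊗ₜ[k] eV (g1 (g1 (g1 v a' i) (f1 v' a'' m) j') (eA (g1 v' a'' m) v'' l) t)
                (eV (g1 v' a'' m) v'' l) o)
          ⊗ₜ[k] eC (g1 (g1 (g1 v a' i) (f1 v' a'' m) j') (eA (g1 v' a'' m) v'' l) t)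
                (eV (g1 v' a'' m) v'' l) o :=
    fun m l => pt_tsNu3 a v a' _ _ (hmul3 m l)
      (fun i j' t => hE (g1 (g1 (g1 v a' i) (f1 v' a'' m) j') (eA (g1 v' a'' m) v'' l) t)
        (eV (g1 v' a'' m) v'' l))

  have key := fun (i : ℕ) => congrArg
    (fun t => rTensor C (rTensor V (mulLeft k (a * f1 v a' i))) (nuTail R2 E (t ⊗ₜ[k] v'')))
    (pt_eq4 h (g1 v a' i) v' a'' (hR1 v' a'') (fun m => hR1 (g1 v a' i) (f1 v' a'' m))
      (fun m j' => hE (g1 (g1 v a' i) (f1 v' a'' m) j') (g1 v' a'' m))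
      (hE (g1 v a' i) v') (fun j => hR3 (eC (g1 v a' i) v' j) a'')
      (fun j μ => hR1 (eV (g1 v a' i) v' j) (f3 (eC (g1 v a' i) v' j) a'' μ)))
  have key2 := fun (m i j' : ℕ) => congrArg
    (rTensor C (rTensor V (mulLeft k (a * (f1 v a' i * f1 (g1 v a' i) (f1 v' a'' m) j')))))
    (pt_eq6 h (g1 (g1 v a' i) (f1 v' a'' m) j') (g1 v' a'' m) v'' (hE (g1 v' a'' m) v'')
      (fun l => hR1 (g1 (g1 v a' i) (f1 v' a'' m) j') (eA (g1 v' a'' m) v'' l))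
      (fun l t => hE (g1 (g1 (g1 v a' i) (f1 v' a'' m) j') (eA (g1 v' a'' m) v'' l) t) (eV (g1 v' a'' m) v'' l))
      (hE (g1 (g1 v a' i) (f1 v' a'' m) j') (g1 v' a'' m)) (fun l => hR2 (eC (g1 (g1 v a' i) (f1 v' a'' m) j') (g1 v' a'' m) l) v'')
      (fun l n => hE (eV (g1 (g1 v a' i) (f1 v' a'' m) j') (g1 v' a'' m) l) (f2 (eC (g1 (g1 v a' i) (f1 v' a'' m) j') (g1 v' a'' m) l) v'' n)))
  have E1 : (lTensor (A ⊗[k] V) (mul' k C) ∘ₗ α k (A ⊗[k] V) C C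
        ∘ₗ rTensor C (tsNu k A V C R1 E) ∘ₗ α' k (A ⊗[k] V) (A ⊗[k] V) C
        ∘ₗ lTensor (A ⊗[k] V) (tsP k A V C R2 R3) ∘ₗ α k (A ⊗[k] V) C (A ⊗[k] V)
        ∘ₗ rTensor (A ⊗[k] V) (tsNu k A V C R1 E))
        (((a ⊗ₜ[k] v) ⊗ₜ[k] (a' ⊗ₜ[k] v')) ⊗ₜ[k] (a'' ⊗ₜ[k] v''))
      = ∑ i ∈ s1 v a', rTensor C (rTensor V (mulLeft k (a * f1 v a' i)))
        (nuTail R2 E ((∑ j ∈ sE (g1 v a' i) v', ∑ μ ∈ s3 (eC (g1 v a' i) v' j) a'', ∑ τ ∈ s1 (eV (g1 v a' i) v' j) (f3 (eC (g1 v a' i) v' j) a'' μ),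
        ((eA (g1 v a' i) v' j * f1 (eV (g1 v a' i) v' j) (f3 (eC (g1 v a' i) v' j) a'' μ) τ) ⊗ₜ[k] g1 (eV (g1 v a' i) v' j) (f3 (eC (g1 v a' i) v' j) a'' μ) τ) ⊗ₜ[k] g3 (eC (g1 v a' i) v' j) a'' μ) ⊗ₜ[k] v'')) := by
    simp only [LinearMap.coe_comp, Function.comp_apply, LinearEquiv.coe_coe,
      TensorProduct.assoc_tmul, TensorProduct.assoc_symm_tmul, LinearMap.lTensor_tmul,
      LinearMap.rTensor_tmul, LinearMap.mul'_apply, LinearMap.mulLeft_apply, eNu, eP, eT,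
      eNuIn, eNuOuter, map_sum, TensorProduct.sum_tmul, TensorProduct.tmul_sum]
    simp only [mul_assoc]
    exact Finset.sum_congr rfl fun i _ => Finset.sum_congr rfl fun j _ =>
      Finset.sum_congr rfl fun μ _ => Finset.sum_comm
  have E3 : (∑ i ∈ s1 v a', rTensor C (rTensor V (mulLeft k (a * f1 v a' i)))
        (nuTail R2 E ((∑ m ∈ s1 v' a'', ∑ j' ∈ s1 (g1 v a' i) (f1 v' a'' m), ∑ l ∈ sE (g1 (g1 v a' i) (f1 v' a'' m) j') (g1 v' a'' m),
        ((f1 (g1 v a' i) (f1 v' a'' m) j' * eA (g1 (g1 v a' i) (f1 v' a'' m) j') (g1 v' a'' m) l) ⊗ₜ[k] eV (g1 (g1 v a' i) (f1 v' a'' m) j') (g1 v' a'' m) l) ⊗ₜ[k] eC (g1 (g1 v a' i) (f1 v' a'' m) j') (g1 v' a'' m) l) ⊗ₜ[k] v'')))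
      = ∑ m ∈ s1 v' a'', ∑ i ∈ s1 v a', ∑ j' ∈ s1 (g1 v a' i) (f1 v' a'' m),
          rTensor C (rTensor V (mulLeft k (a * (f1 v a' i * f1 (g1 v a' i) (f1 v' a'' m) j'))))
          (∑ l ∈ sE (g1 (g1 v a' i) (f1 v' a'' m) j') (g1 v' a'' m), ∑ n ∈ s2 (eC (g1 (g1 v a' i) (f1 v' a'' m) j') (g1 v' a'' m) l) v'', ∑ o ∈ sE (eV (g1 (g1 v a' i) (f1 v' a'' m) j') (g1 v' a'' m) l) (f2 (eC (g1 (g1 v a' i) (f1 v' a'' m) j') (g1 v' a'' m) l) v'' n),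
          ((eA (g1 (g1 v a' i) (f1 v' a'' m) j') (g1 v' a'' m) l * eA (eV (g1 (g1 v a' i) (f1 v' a'' m) j') (g1 v' a'' m) l) (f2 (eC (g1 (g1 v a' i) (f1 v' a'' m) j') (g1 v' a'' m) l) v'' n) o) ⊗ₜ[k] eV (eV (g1 (g1 v a' i) (f1 v' a'' m) j') (g1 v' a'' m) l) (f2 (eC (g1 (g1 v a' i) (f1 v' a'' m) j') (g1 v' a'' m) l) v'' n) o)
            ⊗ₜ[k] (eC (eV (g1 (g1 v a' i) (f1 v' a'' m) j') (g1 v' a'' m) l) (f2 (eC (g1 (g1 v a' i) (f1 v' a'' m) j') (g1 v' a'' m) l) v'' n) o * g2 (eC (g1 (g1 v a' i) (f1 v' a'' m) j') (g1 v' a'' m) l) v'' n)) := by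
    simp only [LinearMap.coe_comp, Function.comp_apply, LinearEquiv.coe_coe,
      TensorProduct.assoc_tmul, TensorProduct.assoc_symm_tmul, LinearMap.lTensor_tmul,
      LinearMap.rTensor_tmul, LinearMap.mul'_apply, LinearMap.mulLeft_apply, eNu, eP, eT,
      eNuIn, eNuOuter, map_sum, TensorProduct.sum_tmul, TensorProduct.tmul_sum]
    simp only [mul_assoc]
    exact Finset.sum_comm
  have E5 : (∑ m ∈ s1 v' a'', ∑ i ∈ s1 v a', ∑ j' ∈ s1 (g1 v a' i) (f1 v' a'' m),
          rTensor C (rTensor V (mulLeft k (a * (f1 v a' i * f1 (g1 v a' i) (f1 v' a'' m) j'))))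
          (∑ l ∈ sE (g1 v' a'' m) v'', ∑ t ∈ s1 (g1 (g1 v a' i) (f1 v' a'' m) j') (eA (g1 v' a'' m) v'' l), ∑ o ∈ sE (g1 (g1 (g1 v a' i) (f1 v' a'' m) j') (eA (g1 v' a'' m) v'' l) t) (eV (g1 v' a'' m) v'' l),
          ((f1 (g1 (g1 v a' i) (f1 v' a'' m) j') (eA (g1 v' a'' m) v'' l) t * eA (g1 (g1 (g1 v a' i) (f1 v' a'' m) j') (eA (g1 v' a'' m) v'' l) t) (eV (g1 v' a'' m) v'' l) o) ⊗ₜ[k] eV (g1 (g1 (g1 v a' i) (f1 v' a'' m) j') (eA (g1 v' a'' m) v'' l) t) (eV (g1 v' a'' m) v'' l) o)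
            ⊗ₜ[k] (eC (g1 (g1 (g1 v a' i) (f1 v' a'' m) j') (eA (g1 v' a'' m) v'' l) t) (eV (g1 v' a'' m) v'' l) o * eC (g1 v' a'' m) v'' l)))
      = (lTensor (A ⊗[k] V) (mul' k C) ∘ₗ α k (A ⊗[k] V) C C
        ∘ₗ rTensor C (tsNu k A V C R1 E) ∘ₗ α' k (A ⊗[k] V) (A ⊗[k] V) C
        ∘ₗ lTensor (A ⊗[k] V) (tsNu k A V C R1 E)
        ∘ₗ α k (A ⊗[k] V) (A ⊗[k] V) (A ⊗[k] V))
        (((a ⊗ₜ[k] v) ⊗ₜ[k] (a' ⊗ₜ[k] v')) ⊗ₜ[k] (a'' ⊗ₜ[k] v'')) := by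
    simp only [LinearMap.coe_comp, Function.comp_apply, LinearEquiv.coe_coe,
      TensorProduct.assoc_tmul, TensorProduct.assoc_symm_tmul, LinearMap.lTensor_tmul,
      LinearMap.rTensor_tmul, LinearMap.mul'_apply, LinearMap.mulLeft_apply, eT,
      eNuIn, eNuOuter, map_sum, TensorProduct.sum_tmul, TensorProduct.tmul_sum]
    simp only [mul_assoc]
    refine Finset.sum_congr rfl fun m _ => Eq.trans
      (Finset.sum_congr rfl fun i _ => Finset.sum_comm) Finset.sum_comm
  calc (lTensor (A ⊗[k] V) (mul' k C) ∘ₗ α k (A ⊗[k] V) C C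
        ∘ₗ rTensor C (tsNu k A V C R1 E) ∘ₗ α' k (A ⊗[k] V) (A ⊗[k] V) C
        ∘ₗ lTensor (A ⊗[k] V) (tsP k A V C R2 R3) ∘ₗ α k (A ⊗[k] V) C (A ⊗[k] V)
        ∘ₗ rTensor (A ⊗[k] V) (tsNu k A V C R1 E))
        (((a ⊗ₜ[k] v) ⊗ₜ[k] (a' ⊗ₜ[k] v')) ⊗ₜ[k] (a'' ⊗ₜ[k] v''))
      = ∑ i ∈ s1 v a', rTensor C (rTensor V (mulLeft k (a * f1 v a' i)))
        (nuTail R2 E ((∑ j ∈ sE (g1 v a' i) v', ∑ μ ∈ s3 (eC (g1 v a' i) v' j) a'', ∑ τ ∈ s1 (eV (g1 v a' i) v' j) (f3 (eC (g1 v a' i) v' j) a'' μ),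
        ((eA (g1 v a' i) v' j * f1 (eV (g1 v a' i) v' j) (f3 (eC (g1 v a' i) v' j) a'' μ) τ) ⊗ₜ[k] g1 (eV (g1 v a' i) v' j) (f3 (eC (g1 v a' i) v' j) a'' μ) τ) ⊗ₜ[k] g3 (eC (g1 v a' i) v' j) a'' μ) ⊗ₜ[k] v'')) := E1
    _ = ∑ i ∈ s1 v a', rTensor C (rTensor V (mulLeft k (a * f1 v a' i)))
        (nuTail R2 E ((∑ m ∈ s1 v' a'', ∑ j' ∈ s1 (g1 v a' i) (f1 v' a'' m), ∑ l ∈ sE (g1 (g1 v a' i) (f1 v' a'' m) j') (g1 v' a'' m),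
        ((f1 (g1 v a' i) (f1 v' a'' m) j' * eA (g1 (g1 v a' i) (f1 v' a'' m) j') (g1 v' a'' m) l) ⊗ₜ[k] eV (g1 (g1 v a' i) (f1 v' a'' m) j') (g1 v' a'' m) l) ⊗ₜ[k] eC (g1 (g1 v a' i) (f1 v' a'' m) j') (g1 v' a'' m) l) ⊗ₜ[k] v'')) :=
        Finset.sum_congr rfl fun i _ => (key i).symm
    _ = ∑ m ∈ s1 v' a'', ∑ i ∈ s1 v a', ∑ j' ∈ s1 (g1 v a' i) (f1 v' a'' m),
          rTensor C (rTensor V (mulLeft k (a * (f1 v a' i * f1 (g1 v a' i) (f1 v' a'' m) j'))))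
          (∑ l ∈ sE (g1 (g1 v a' i) (f1 v' a'' m) j') (g1 v' a'' m), ∑ n ∈ s2 (eC (g1 (g1 v a' i) (f1 v' a'' m) j') (g1 v' a'' m) l) v'', ∑ o ∈ sE (eV (g1 (g1 v a' i) (f1 v' a'' m) j') (g1 v' a'' m) l) (f2 (eC (g1 (g1 v a' i) (f1 v' a'' m) j') (g1 v' a'' m) l) v'' n),
          ((eA (g1 (g1 v a' i) (f1 v' a'' m) j') (g1 v' a'' m) l * eA (eV (g1 (g1 v a' i) (f1 v' a'' m) j') (g1 v' a'' m) l) (f2 (eC (g1 (g1 v a' i) (f1 v' a'' m) j') (g1 v' a'' m) l) v'' n) o) ⊗ₜ[k] eV (eV (g1 (g1 v a' i) (f1 v' a'' m) j') (g1 v' a'' m) l) (f2 (eC (g1 (g1 v a' i) (f1 v' a'' m) j') (g1 v' a'' m) l) v'' n) o)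
            ⊗ₜ[k] (eC (eV (g1 (g1 v a' i) (f1 v' a'' m) j') (g1 v' a'' m) l) (f2 (eC (g1 (g1 v a' i) (f1 v' a'' m) j') (g1 v' a'' m) l) v'' n) o * g2 (eC (g1 (g1 v a' i) (f1 v' a'' m) j') (g1 v' a'' m) l) v'' n)) := E3
    _ = ∑ m ∈ s1 v' a'', ∑ i ∈ s1 v a', ∑ j' ∈ s1 (g1 v a' i) (f1 v' a'' m),
          rTensor C (rTensor V (mulLeft k (a * (f1 v a' i * f1 (g1 v a' i) (f1 v' a'' m) j'))))
          (∑ l ∈ sE (g1 v' a'' m) v'', ∑ t ∈ s1 (g1 (g1 v a' i) (f1 v' a'' m) j') (eA (g1 v' a'' m) v'' l), ∑ o ∈ sE (g1 (g1 (g1 v a' i) (f1 v' a'' m) j') (eA (g1 v' a'' m) v'' l) t) (eV (g1 v' a'' m) v'' l),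
          ((f1 (g1 (g1 v a' i) (f1 v' a'' m) j') (eA (g1 v' a'' m) v'' l) t * eA (g1 (g1 (g1 v a' i) (f1 v' a'' m) j') (eA (g1 v' a'' m) v'' l) t) (eV (g1 v' a'' m) v'' l) o) ⊗ₜ[k] eV (g1 (g1 (g1 v a' i) (f1 v' a'' m) j') (eA (g1 v' a'' m) v'' l) t) (eV (g1 v' a'' m) v'' l) o)
            ⊗ₜ[k] (eC (g1 (g1 (g1 v a' i) (f1 v' a'' m) j') (eA (g1 v' a'' m) v'' l) t) (eV (g1 v' a'' m) v'' l) o * eC (g1 v' a'' m) v'' l)) :=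
        Finset.sum_congr rfl fun m _ => Finset.sum_congr rfl fun i _ =>
          Finset.sum_congr rfl fun j' _ => (key2 m i j').symm
    _ = (lTensor (A ⊗[k] V) (mul' k C) ∘ₗ α k (A ⊗[k] V) C C
        ∘ₗ rTensor C (tsNu k A V C R1 E) ∘ₗ α' k (A ⊗[k] V) (A ⊗[k] V) C
        ∘ₗ lTensor (A ⊗[k] V) (tsNu k A V C R1 E)
        ∘ₗ α k (A ⊗[k] V) (A ⊗[k] V) (A ⊗[k] V))
        (((a ⊗ₜ[k] v) ⊗ₜ[k] (a' ⊗ₜ[k] v')) ⊗ₜ[k] (a'' ⊗ₜ[k] v'')) := E5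

lemma mir4_core (c : C) (a a' : A) (v v' : V) :
    (lTensor (A ⊗[k] V) (mul' k C) ∘ₗ α k (A ⊗[k] V) C C
        ∘ₗ rTensor C (tsNu k A V C R1 E) ∘ₗ α' k (A ⊗[k] V) (A ⊗[k] V) C
        ∘ₗ lTensor (A ⊗[k] V) (tsP k A V C R2 R3) ∘ₗ α k (A ⊗[k] V) C (A ⊗[k] V)
        ∘ₗ rTensor (A ⊗[k] V) (tsP k A V C R2 R3))
        ((c ⊗ₜ[k] (a ⊗ₜ[k] v)) ⊗ₜ[k] (a' ⊗ₜ[k] v'))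
      = (lTensor (A ⊗[k] V) (mul' k C) ∘ₗ α k (A ⊗[k] V) C C
        ∘ₗ rTensor C (tsP k A V C R2 R3) ∘ₗ α' k C (A ⊗[k] V) C
        ∘ₗ lTensor C (tsNu k A V C R1 E) ∘ₗ α k C (A ⊗[k] V) (A ⊗[k] V))
        ((c ⊗ₜ[k] (a ⊗ₜ[k] v)) ⊗ₜ[k] (a' ⊗ₜ[k] v')) := by
  choose s1 f1 g1 hR1 using fun (x : V) (b : A) => rep2 (k := k) (R1 (x ⊗ₜ[k] b))
  choose s2 f2 g2 hR2 using fun (c₀ : C) (x : V) => rep2 (k := k) (R2 (c₀ ⊗ₜ[k] x))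
  choose s3 f3 g3 hR3 using fun (c₀ : C) (b : A) => rep2 (k := k) (R3 (c₀ ⊗ₜ[k] b))
  choose sE eA eV eC hE using fun (x y : V) => rep3 (k := k) (E (x ⊗ₜ[k] y))
  have eNu : ∀ (b : A) (wv : V) (b' : A) (u : V),
      tsNu k A V C R1 E ((b ⊗ₜ[k] wv) ⊗ₜ[k] (b' ⊗ₜ[k] u))
        = ∑ i ∈ s1 wv b', ∑ j ∈ sE (g1 wv b' i) u,
            ((b * (f1 wv b' i * eA (g1 wv b' i) u j)) ⊗ₜ[k] eV (g1 wv b' i) u j)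
              ⊗ₜ[k] eC (g1 wv b' i) u j :=
    fun b wv b' u => pt_tsNu b wv b' u (hR1 wv b') (fun i => hE (g1 wv b' i) u)
  have eP : ∀ (c₀ : C) (b : A) (u : V),
      tsP k A V C R2 R3 (c₀ ⊗ₜ[k] (b ⊗ₜ[k] u))
        = ∑ i ∈ s3 c₀ b, ∑ j ∈ s2 (g3 c₀ b i) u,
            (f3 c₀ b i ⊗ₜ[k] f2 (g3 c₀ b i) u j) ⊗ₜ[k] g2 (g3 c₀ b i) u j :=
    fun c₀ b u => pt_tsP c₀ b u (hR3 c₀ b) (fun i => hR2 (g3 c₀ b i) u)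
  have eT : ∀ (b : A) (wv : V) (c₀ : C) (u : V),
      nuTail R2 E (((b ⊗ₜ[k] wv) ⊗ₜ[k] c₀) ⊗ₜ[k] u)
        = ∑ i ∈ s2 c₀ u, ∑ j ∈ sE wv (f2 c₀ u i),
            ((b * eA wv (f2 c₀ u i) j) ⊗ₜ[k] eV wv (f2 c₀ u i) j)
              ⊗ₜ[k] (eC wv (f2 c₀ u i) j * g2 c₀ u i) :=
    fun b wv c₀ u => pt_nuTail b wv c₀ u (hR2 c₀ u) (fun i => hE wv (f2 c₀ u i))
  have hmul3 : ∀ t' l, R3 (c ⊗ₜ[k] (a * (f1 v a' t' * eA (g1 v a' t') v' l)))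
      = ∑ i ∈ s3 c a, ∑ j' ∈ s3 (g3 c a i) (f1 v a' t'),
          ∑ s ∈ s3 (g3 (g3 c a i) (f1 v a' t') j') (eA (g1 v a' t') v' l),
          (f3 c a i * (f3 (g3 c a i) (f1 v a' t') j' * f3 (g3 (g3 c a i) (f1 v a' t') j') (eA (g1 v a' t') v' l) s))
            ⊗ₜ[k] g3 (g3 (g3 c a i) (f1 v a' t') j') (eA (g1 v a' t') v' l) s :=
    fun t' l => pt_r3_mul_left3 h c a _ _ (hR3 c a)
      (fun i => pt_r3_mul_left h _ _ _ (hR3 (g3 c a i) (f1 v a' t'))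
        (fun j' => hR3 (g3 (g3 c a i) (f1 v a' t') j') (eA (g1 v a' t') v' l)))
  have ePOuter : ∀ t' l, tsP k A V C R2 R3 (c ⊗ₜ[k]
        ((a * (f1 v a' t' * eA (g1 v a' t') v' l)) ⊗ₜ[k] eV (g1 v a' t') v' l))
      = ∑ i ∈ s3 c a, ∑ j' ∈ s3 (g3 c a i) (f1 v a' t'),
          ∑ s ∈ s3 (g3 (g3 c a i) (f1 v a' t') j') (eA (g1 v a' t') v' l),
          ∑ n ∈ s2 (g3 (g3 (g3 c a i) (f1 v a' t') j') (eA (g1 v a' t') v' l) s) (eV (g1 v a' t') v' l),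
          ((f3 c a i * (f3 (g3 c a i) (f1 v a' t') j' * f3 (g3 (g3 c a i) (f1 v a' t') j') (eA (g1 v a' t') v' l) s))
              ⊗ₜ[k] f2 (g3 (g3 (g3 c a i) (f1 v a' t') j') (eA (g1 v a' t') v' l) s) (eV (g1 v a' t') v' l) n)
            ⊗ₜ[k] g2 (g3 (g3 (g3 c a i) (f1 v a' t') j') (eA (g1 v a' t') v' l) s) (eV (g1 v a' t') v' l) n :=
    fun t' l => pt_tsP3 c a _ _ (hmul3 t' l)
      (fun i j' s => hR2 (g3 (g3 (g3 c a i) (f1 v a' t') j') (eA (g1 v a' t') v' l) s) (eV (g1 v a' t') v' l))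
  have keyA := fun (i : ℕ) => congrArg
    (fun t => rTensor C (rTensor V (mulLeft k (f3 c a i)))
      (nuTail R2 E ((α' k A V C t) ⊗ₜ[k] v')))
    (pt_eq3 h (g3 c a i) v a' (hR1 v a') (fun t' => hR3 (g3 c a i) (f1 v a' t'))
      (fun t' j' => hR2 (g3 (g3 c a i) (f1 v a' t') j') (g1 v a' t'))
      (hR2 (g3 c a i) v) (fun m => hR3 (g2 (g3 c a i) v m) a')
      (fun m j => hR1 (f2 (g3 c a i) v m) (f3 (g2 (g3 c a i) v m) a' j)))
  have keyB := fun (i t' j' : ℕ) => congrArg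
    (rTensor C (rTensor V (mulLeft k (f3 c a i * f3 (g3 c a i) (f1 v a' t') j'))))
    (pt_eq5 h (g3 (g3 c a i) (f1 v a' t') j') (g1 v a' t') v' (hR2 (g3 (g3 c a i) (f1 v a' t') j') (g1 v a' t'))
      (fun m' => hR2 (g2 (g3 (g3 c a i) (f1 v a' t') j') (g1 v a' t') m') v')
      (fun m' n' => hE (f2 (g3 (g3 c a i) (f1 v a' t') j') (g1 v a' t') m') (f2 (g2 (g3 (g3 c a i) (f1 v a' t') j') (g1 v a' t') m') v' n'))
      (hE (g1 v a' t') v') (fun l => hR3 (g3 (g3 c a i) (f1 v a' t') j') (eA (g1 v a' t') v' l))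
      (fun l s => hR2 (g3 (g3 (g3 c a i) (f1 v a' t') j') (eA (g1 v a' t') v' l) s) (eV (g1 v a' t') v' l)))
  have E1 : (lTensor (A ⊗[k] V) (mul' k C) ∘ₗ α k (A ⊗[k] V) C C
        ∘ₗ rTensor C (tsNu k A V C R1 E) ∘ₗ α' k (A ⊗[k] V) (A ⊗[k] V) C
        ∘ₗ lTensor (A ⊗[k] V) (tsP k A V C R2 R3) ∘ₗ α k (A ⊗[k] V) C (A ⊗[k] V)
        ∘ₗ rTensor (A ⊗[k] V) (tsP k A V C R2 R3))
        ((c ⊗ₜ[k] (a ⊗ₜ[k] v)) ⊗ₜ[k] (a' ⊗ₜ[k] v'))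
      = ∑ i ∈ s3 c a, rTensor C (rTensor V (mulLeft k (f3 c a i)))
        (nuTail R2 E ((α' k A V C (∑ m ∈ s2 (g3 c a i) v, ∑ j ∈ s3 (g2 (g3 c a i) v m) a', ∑ t ∈ s1 (f2 (g3 c a i) v m) (f3 (g2 (g3 c a i) v m) a' j),
          f1 (f2 (g3 c a i) v m) (f3 (g2 (g3 c a i) v m) a' j) t ⊗ₜ[k] (g1 (f2 (g3 c a i) v m) (f3 (g2 (g3 c a i) v m) a' j) t ⊗ₜ[k] g3 (g2 (g3 c a i) v m) a' j))) ⊗ₜ[k] v')) := by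
    simp only [LinearMap.coe_comp, Function.comp_apply, LinearEquiv.coe_coe,
      TensorProduct.assoc_tmul, TensorProduct.assoc_symm_tmul, LinearMap.lTensor_tmul,
      LinearMap.rTensor_tmul, LinearMap.mul'_apply, LinearMap.mulLeft_apply, eNu, eP, eT,
      map_sum, TensorProduct.sum_tmul, TensorProduct.tmul_sum, mul_assoc]
    exact Finset.sum_congr rfl fun i _ => Finset.sum_congr rfl fun m _ =>
      Finset.sum_congr rfl fun j _ => Finset.sum_comm
  have E3 : (∑ i ∈ s3 c a, rTensor C (rTensor V (mulLeft k (f3 c a i)))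
        (nuTail R2 E ((α' k A V C (∑ t' ∈ s1 v a', ∑ j' ∈ s3 (g3 c a i) (f1 v a' t'), ∑ m' ∈ s2 (g3 (g3 c a i) (f1 v a' t') j') (g1 v a' t'),
          f3 (g3 c a i) (f1 v a' t') j' ⊗ₜ[k] (f2 (g3 (g3 c a i) (f1 v a' t') j') (g1 v a' t') m' ⊗ₜ[k] g2 (g3 (g3 c a i) (f1 v a' t') j') (g1 v a' t') m'))) ⊗ₜ[k] v')))
      = ∑ t' ∈ s1 v a', ∑ i ∈ s3 c a, ∑ j' ∈ s3 (g3 c a i) (f1 v a' t'),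
          rTensor C (rTensor V (mulLeft k (f3 c a i * f3 (g3 c a i) (f1 v a' t') j')))
          (∑ m' ∈ s2 (g3 (g3 c a i) (f1 v a' t') j') (g1 v a' t'), ∑ n' ∈ s2 (g2 (g3 (g3 c a i) (f1 v a' t') j') (g1 v a' t') m') v', ∑ o' ∈ sE (f2 (g3 (g3 c a i) (f1 v a' t') j') (g1 v a' t') m') (f2 (g2 (g3 (g3 c a i) (f1 v a' t') j') (g1 v a' t') m') v' n'),
          (eA (f2 (g3 (g3 c a i) (f1 v a' t') j') (g1 v a' t') m') (f2 (g2 (g3 (g3 c a i) (f1 v a' t') j') (g1 v a' t') m') v' n') o' ⊗ₜ[k] eV (f2 (g3 (g3 c a i) (f1 v a' t') j') (g1 v a' t') m') (f2 (g2 (g3 (g3 c a i) (f1 v a' t') j') (g1 v a' t') m') v' n') o')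
            ⊗ₜ[k] (eC (f2 (g3 (g3 c a i) (f1 v a' t') j') (g1 v a' t') m') (f2 (g2 (g3 (g3 c a i) (f1 v a' t') j') (g1 v a' t') m') v' n') o' * g2 (g2 (g3 (g3 c a i) (f1 v a' t') j') (g1 v a' t') m') v' n')) := by
    simp only [LinearMap.coe_comp, Function.comp_apply, LinearEquiv.coe_coe,
      TensorProduct.assoc_tmul, TensorProduct.assoc_symm_tmul, LinearMap.lTensor_tmul,
      LinearMap.rTensor_tmul, LinearMap.mul'_apply, LinearMap.mulLeft_apply, eT,
      map_sum, TensorProduct.sum_tmul, TensorProduct.tmul_sum, mul_assoc]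
    exact Finset.sum_comm
  have E5 : (∑ t' ∈ s1 v a', ∑ i ∈ s3 c a, ∑ j' ∈ s3 (g3 c a i) (f1 v a' t'),
          rTensor C (rTensor V (mulLeft k (f3 c a i * f3 (g3 c a i) (f1 v a' t') j')))
          (∑ l ∈ sE (g1 v a' t') v', ∑ s ∈ s3 (g3 (g3 c a i) (f1 v a' t') j') (eA (g1 v a' t') v' l), ∑ n ∈ s2 (g3 (g3 (g3 c a i) (f1 v a' t') j') (eA (g1 v a' t') v' l) s) (eV (g1 v a' t') v' l),
          (f3 (g3 (g3 c a i) (f1 v a' t') j') (eA (g1 v a' t') v' l) s ⊗ₜ[k] f2 (g3 (g3 (g3 c a i) (f1 v a' t') j') (eA (g1 v a' t') v' l) s) (eV (g1 v a' t') v' l) n)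
            ⊗ₜ[k] (g2 (g3 (g3 (g3 c a i) (f1 v a' t') j') (eA (g1 v a' t') v' l) s) (eV (g1 v a' t') v' l) n * eC (g1 v a' t') v' l)))
      = (lTensor (A ⊗[k] V) (mul' k C) ∘ₗ α k (A ⊗[k] V) C C
        ∘ₗ rTensor C (tsP k A V C R2 R3) ∘ₗ α' k C (A ⊗[k] V) C
        ∘ₗ lTensor C (tsNu k A V C R1 E) ∘ₗ α k C (A ⊗[k] V) (A ⊗[k] V))
        ((c ⊗ₜ[k] (a ⊗ₜ[k] v)) ⊗ₜ[k] (a' ⊗ₜ[k] v')) := by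
    simp only [LinearMap.coe_comp, Function.comp_apply, LinearEquiv.coe_coe,
      TensorProduct.assoc_tmul, TensorProduct.assoc_symm_tmul, LinearMap.lTensor_tmul,
      LinearMap.rTensor_tmul, LinearMap.mul'_apply, LinearMap.mulLeft_apply, eNu, ePOuter,
      map_sum, TensorProduct.sum_tmul, TensorProduct.tmul_sum, mul_assoc]
    refine Finset.sum_congr rfl fun t' _ => Eq.trans
      (Finset.sum_congr rfl fun i _ => Finset.sum_comm) Finset.sum_comm
  calc (lTensor (A ⊗[k] V) (mul' k C) ∘ₗ α k (A ⊗[k] V) C C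
        ∘ₗ rTensor C (tsNu k A V C R1 E) ∘ₗ α' k (A ⊗[k] V) (A ⊗[k] V) C
        ∘ₗ lTensor (A ⊗[k] V) (tsP k A V C R2 R3) ∘ₗ α k (A ⊗[k] V) C (A ⊗[k] V)
        ∘ₗ rTensor (A ⊗[k] V) (tsP k A V C R2 R3))
        ((c ⊗ₜ[k] (a ⊗ₜ[k] v)) ⊗ₜ[k] (a' ⊗ₜ[k] v'))
      = ∑ i ∈ s3 c a, rTensor C (rTensor V (mulLeft k (f3 c a i)))
        (nuTail R2 E ((α' k A V C (∑ m ∈ s2 (g3 c a i) v, ∑ j ∈ s3 (g2 (g3 c a i) v m) a', ∑ t ∈ s1 (f2 (g3 c a i) v m) (f3 (g2 (g3 c a i) v m) a' j),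
          f1 (f2 (g3 c a i) v m) (f3 (g2 (g3 c a i) v m) a' j) t ⊗ₜ[k] (g1 (f2 (g3 c a i) v m) (f3 (g2 (g3 c a i) v m) a' j) t ⊗ₜ[k] g3 (g2 (g3 c a i) v m) a' j))) ⊗ₜ[k] v')) := E1
    _ = ∑ i ∈ s3 c a, rTensor C (rTensor V (mulLeft k (f3 c a i)))
        (nuTail R2 E ((α' k A V C (∑ t' ∈ s1 v a', ∑ j' ∈ s3 (g3 c a i) (f1 v a' t'), ∑ m' ∈ s2 (g3 (g3 c a i) (f1 v a' t') j') (g1 v a' t'),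
          f3 (g3 c a i) (f1 v a' t') j' ⊗ₜ[k] (f2 (g3 (g3 c a i) (f1 v a' t') j') (g1 v a' t') m' ⊗ₜ[k] g2 (g3 (g3 c a i) (f1 v a' t') j') (g1 v a' t') m'))) ⊗ₜ[k] v')) :=
        Finset.sum_congr rfl fun i _ => (keyA i).symm
    _ = ∑ t' ∈ s1 v a', ∑ i ∈ s3 c a, ∑ j' ∈ s3 (g3 c a i) (f1 v a' t'),
          rTensor C (rTensor V (mulLeft k (f3 c a i * f3 (g3 c a i) (f1 v a' t') j')))
          (∑ m' ∈ s2 (g3 (g3 c a i) (f1 v a' t') j') (g1 v a' t'), ∑ n' ∈ s2 (g2 (g3 (g3 c a i) (f1 v a' t') j') (g1 v a' t') m') v', ∑ o' ∈ sE (f2 (g3 (g3 c a i) (f1 v a' t') j') (g1 v a' t') m') (f2 (g2 (g3 (g3 c a i) (f1 v a' t') j') (g1 v a' t') m') v' n'),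
          (eA (f2 (g3 (g3 c a i) (f1 v a' t') j') (g1 v a' t') m') (f2 (g2 (g3 (g3 c a i) (f1 v a' t') j') (g1 v a' t') m') v' n') o' ⊗ₜ[k] eV (f2 (g3 (g3 c a i) (f1 v a' t') j') (g1 v a' t') m') (f2 (g2 (g3 (g3 c a i) (f1 v a' t') j') (g1 v a' t') m') v' n') o')
            ⊗ₜ[k] (eC (f2 (g3 (g3 c a i) (f1 v a' t') j') (g1 v a' t') m') (f2 (g2 (g3 (g3 c a i) (f1 v a' t') j') (g1 v a' t') m') v' n') o' * g2 (g2 (g3 (g3 c a i) (f1 v a' t') j') (g1 v a' t') m') v' n')) := E3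
    _ = ∑ t' ∈ s1 v a', ∑ i ∈ s3 c a, ∑ j' ∈ s3 (g3 c a i) (f1 v a' t'),
          rTensor C (rTensor V (mulLeft k (f3 c a i * f3 (g3 c a i) (f1 v a' t') j')))
          (∑ l ∈ sE (g1 v a' t') v', ∑ s ∈ s3 (g3 (g3 c a i) (f1 v a' t') j') (eA (g1 v a' t') v' l), ∑ n ∈ s2 (g3 (g3 (g3 c a i) (f1 v a' t') j') (eA (g1 v a' t') v' l) s) (eV (g1 v a' t') v' l),
          (f3 (g3 (g3 c a i) (f1 v a' t') j') (eA (g1 v a' t') v' l) s ⊗ₜ[k] f2 (g3 (g3 (g3 c a i) (f1 v a' t') j') (eA (g1 v a' t') v' l) s) (eV (g1 v a' t') v' l) n)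
            ⊗ₜ[k] (g2 (g3 (g3 (g3 c a i) (f1 v a' t') j') (eA (g1 v a' t') v' l) s) (eV (g1 v a' t') v' l) n * eC (g1 v a' t') v' l)) :=
        Finset.sum_congr rfl fun t' _ => Finset.sum_congr rfl fun i _ =>
          Finset.sum_congr rfl fun j' _ => keyB i t' j'
    _ = (lTensor (A ⊗[k] V) (mul' k C) ∘ₗ α k (A ⊗[k] V) C C
        ∘ₗ rTensor C (tsP k A V C R2 R3) ∘ₗ α' k C (A ⊗[k] V) C
        ∘ₗ lTensor C (tsNu k A V C R1 E) ∘ₗ α k C (A ⊗[k] V) (A ⊗[k] V))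
        ((c ⊗ₜ[k] (a ⊗ₜ[k] v)) ⊗ₜ[k] (a' ⊗ₜ[k] v')) := E5

end Core
end Proof


/-- `P = (id_A ⊗ R2)∘(R3 ⊗ id_V)` and
`ν((a ⊗ v) ⊗ (a' ⊗ v')) = (a a'_{R1} E_A(v_{R1}, v') ⊗ E_V(v_{R1}, v')) ⊗ E_C(v_{R1}, v')`
satisfy the mirror crossed product conditions (mir0)-(mir4) for base algebra `C` and
the vector space `A ⊗ V` with distinguished element `1_A ⊗ 1_V`. -/
theorem two_sided_data_gives_mirror_data
    (A V C : Type*) [Ring A] [Algebra k A] [AddCommGroup V] [Module k V]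
    [Ring C] [Algebra k C] (e : V) (he : e ≠ 0)
    (R1 : V ⊗[k] A →ₗ[k] A ⊗[k] V) (R2 : C ⊗[k] V →ₗ[k] V ⊗[k] C)
    (R3 : C ⊗[k] A →ₗ[k] A ⊗[k] C) (E : V ⊗[k] V →ₗ[k] (A ⊗[k] V) ⊗[k] C)
    (h : IsTwoSidedData k A V C e R1 R2 R3 E) :
    IsMirrorData k (A ⊗[k] V) C (mul' k C) 1 ((1 : A) ⊗ₜ[k] e)
      (tsP k A V C R2 R3) (tsNu k A V C R1 E) := by
  refine ⟨?_, ?_, ?_, ?_, ?_, ?_, ?_⟩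
  · intro b
    simp [tsP, h.twist.unit_right, h.r2a]
  · intro w
    induction w using TensorProduct.induction_on with
    | zero => simp
    | add x y hx hy => simp [tmul_add, add_tmul, hx, hy]
    | tmul a v => simp [tsP, h.twist.unit_left a, h.r2b]
  · intro w
    induction w using TensorProduct.induction_on with
    | zero => simp
    | add x y hx hy => simp [add_tmul, tmul_add, hx, hy]
    | tmul a v => simp [tsNu, mulAV, h.r1b, h.eb]
  · intro w
    induction w using TensorProduct.induction_on with
    | zero => simp
    | add x y hx hy => simp [tmul_add, add_tmul, hx, hy]
    | tmul a v => simp [tsNu, mulAV, h.r1a, h.ea]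
  · refine TensorProduct.ext' fun x y => ?_
    induction x using TensorProduct.induction_on with
    | zero => simp
    | add x₁ x₂ h₁ h₂ => simp only [add_tmul, map_add, h₁, h₂]
    | tmul c c' =>
      induction y using TensorProduct.induction_on with
      | zero => simp
      | add y₁ y₂ h₁ h₂ => simp only [tmul_add, map_add, h₁, h₂]
      | tmul a v => exact mir2_core h c c' a v
  · refine TensorProduct.ext' fun xy z => ?_
    induction xy using TensorProduct.induction_on with
    | zero => simp
    | add u w hu hw => simp only [add_tmul, map_add, hu, hw]
    | tmul x y =>
      induction x using TensorProduct.induction_on with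
      | zero => simp
      | add u w hu hw => simp only [add_tmul, map_add, hu, hw]
      | tmul a v =>
        induction y using TensorProduct.induction_on with
        | zero => simp
        | add u w hu hw => simp only [add_tmul, tmul_add, map_add, hu, hw]
        | tmul a' v' =>
          induction z using TensorProduct.induction_on with
          | zero => simp
          | add u w hu hw => simp only [tmul_add, map_add, hu, hw]
          | tmul a'' v'' => exact mir3_core h a a' a'' v v' v''
  · refine TensorProduct.ext' fun cx y => ?_
    induction cx using TensorProduct.induction_on with
    | zero => simp
    | add u w hu hw => simp only [add_tmul, map_add, hu, hw]
    | tmul c x =>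
      induction x using TensorProduct.induction_on with
      | zero => simp
      | add u w hu hw => simp only [add_tmul, tmul_add, map_add, hu, hw]
      | tmul a v =>
        induction y using TensorProduct.induction_on with
        | zero => simp
        | add u w hu hw => simp only [tmul_add, map_add, hu, hw]
        | tmul a' v' => exact mir4_core h c a a' v v'
end TwoSidedCP
end
end
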